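/- arXiv:1504.05996 — 10 statements merged into one kernel-verified Lean document; each statement's English description precedes it below -/
import Mathlib

section
/- Let f0, f1 be positive real numbers and let p ∈ [0,1]. Define p' = f1·p / (f1·p + f0·(1−p)). Then p'·(1−p') ≥ p·(1−p)·exp(−|ln(f1/f0)|). -/
/-!
Write `D = f1 p + f0 (1 - p)` for the evidence. Then `p' (1 - p') = f1 f0 p (1 - p) / D²`, and
`D`, a convex combination of `f1` and `f0`, is at most `max f1 f0`. Since
`f1 f0 = min f1 f0 · max f1 f0`, this gives `p' (1 - p') ≥ p (1 - p) · min f1 f0 / max f1 f0`,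
and `exp (-|log (f1 / f0)|)` is exactly that ratio.
-/

open Real

theorem Real.exp_neg_abs_log_div {a b : ℝ} (ha : 0 < a) (hb : 0 < b) :
    exp (-|log (a / b)|) = min a b / max a b := by
  rcases le_total a b with hab | hba
  · have hlog : log (a / b) ≤ 0 := log_nonpos (by positivity) ((div_le_one hb).2 hab)
    rw [abs_of_nonpos hlog, neg_neg, exp_log (by positivity), min_eq_left hab, max_eq_right hab]
  · have hlog : 0 ≤ log (a / b) := log_nonneg ((le_div_iff₀ hb).2 (by linarith))
    rw [abs_of_nonneg hlog, ← log_inv, exp_log (by positivity), inv_div, min_eq_right hba,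
      max_eq_left hba]

theorem posterior_mul_one_sub_posterior (a b p : ℝ) (hD : a * p + b * (1 - p) ≠ 0) :
    a * p / (a * p + b * (1 - p)) * (1 - a * p / (a * p + b * (1 - p)))
      = a * b * (p * (1 - p)) / (a * p + b * (1 - p)) ^ 2 := by
  field_simp
  ring

/-- Single-step posterior-variance contraction bound: if `p' = f1·p / (f1·p + f0·(1−p))`
is the Bayes posterior obtained from prior `p` and positive likelihoods `f1, f0`, then
`p'·(1−p') ≥ p·(1−p)·exp(−|ln(f1/f0)|)`. -/
theorem stmt_0 (f0 f1 p : ℝ) (hf0 : 0 < f0) (hf1 : 0 < f1)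
    (hp : p ∈ Set.Icc (0 : ℝ) 1) :
    (f1 * p / (f1 * p + f0 * (1 - p))) * (1 - f1 * p / (f1 * p + f0 * (1 - p)))
      ≥ p * (1 - p) * Real.exp (-|Real.log (f1 / f0)|) := by
  obtain ⟨hp0, hp1⟩ := hp
  set D := f1 * p + f0 * (1 - p) with hD
  have hD_eq : D = p • f1 + (1 - p) • f0 := by simp only [hD, smul_eq_mul]; ring
  have hD_pos : 0 < D :=
    (lt_min hf1 hf0).trans_le (hD_eq ▸ Convex.min_le_combo f1 f0 hp0 (by linarith) (by ring))
  have hD_le : D ≤ max f1 f0 :=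
    hD_eq ▸ Convex.combo_le_max f1 f0 hp0 (by linarith) (by ring)
  rw [posterior_mul_one_sub_posterior f1 f0 p hD_pos.ne', exp_neg_abs_log_div hf1 hf0, ge_iff_le]
  calc p * (1 - p) * (min f1 f0 / max f1 f0)
      = f1 * f0 * (p * (1 - p)) / max f1 f0 ^ 2 := by
        rw [← min_mul_max f1 f0]; field_simp
    _ ≤ f1 * f0 * (p * (1 - p)) / D ^ 2 := by gcongr
end

section
/- Let (Ω,P) be a probability space, (E,𝔈) a measurable space, μ a probability measure on E, and Y_1,…,Y_t : Ω → E i.i.d. random variables with common law μ. Let f0, f1 : E → (0,∞) be measurable with ∫_E |ln(f1/f0)| dμ < ∞. Fix p_0 ∈ [0,1] and define random variables p_j recursively by p_j = f1(Y_j)·p_{j−1} / (f1(Y_j)·p_{j−1} + f0(Y_j)·(1−p_{j−1})) for 1 ≤ j ≤ t. Then E[p_t·(1−p_t)] ≥ p_0·(1−p_0)·exp(−t·∫_E |ln(f1/f0)| dμ). -/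
/-!
A single Bayes update `q ↦ u = a q / D`, `D = a q + b (1 - q)`, multiplies the variance by
`u (1 - u) / (q (1 - q)) = a b / D²`. Since `D` is a convex combination of `a` and `b`, this
factor is at least `a b / max(a, b)² = exp (-|log (a / b)|)`. Iterating gives the pathwise bound
`p_t (1 - p_t) ≥ p_0 (1 - p_0) exp (-∑ᵢ |log (f1 / f0) (Yᵢ)|)`, and Jensen's inequality for
`exp` turns the expectation of the right-hand side into `exp (-t ∫ |log (f1 / f0)| dμ)`.
-/

open MeasureTheory ProbabilityTheory

/-- Posterior probability of the bit after an observation with likelihoods `a` (bit `1`) and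
`b` (bit `0`), starting from the prior `q`. -/
noncomputable def bayesUpdate (a b q : ℝ) : ℝ := a * q / (a * q + b * (1 - q))

section BayesUpdate

variable {a b q : ℝ}

lemma bayesUpdate_denom_pos (ha : 0 < a) (hb : 0 < b) (hq : q ∈ Set.Icc (0 : ℝ) 1) :
    0 < a * q + b * (1 - q) := by
  obtain ⟨hq0, hq1⟩ := hq
  rcases hq0.eq_or_lt with rfl | hq0
  · simpa using hb
  · nlinarith [mul_pos ha hq0, mul_nonneg hb.le (sub_nonneg.mpr hq1)]

lemma bayesUpdate_mem_Icc (ha : 0 < a) (hb : 0 < b) (hq : q ∈ Set.Icc (0 : ℝ) 1) :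
    bayesUpdate a b q ∈ Set.Icc (0 : ℝ) 1 := by
  have hD := bayesUpdate_denom_pos ha hb hq
  refine ⟨div_nonneg (mul_nonneg ha.le hq.1) hD.le, (div_le_one hD).mpr ?_⟩
  nlinarith [mul_nonneg hb.le (sub_nonneg.mpr hq.2)]

lemma bayesUpdate_mul_one_sub (ha : 0 < a) (hb : 0 < b) (hq : q ∈ Set.Icc (0 : ℝ) 1) :
    bayesUpdate a b q * (1 - bayesUpdate a b q) =
      q * (1 - q) * (a * b / (a * q + b * (1 - q)) ^ 2) := by
  have hD := (bayesUpdate_denom_pos ha hb hq).ne'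
  unfold bayesUpdate
  field_simp
  ring

lemma exp_neg_abs_log_div_le (ha : 0 < a) (hb : 0 < b) (hq : q ∈ Set.Icc (0 : ℝ) 1) :
    Real.exp (-|Real.log (a / b)|) ≤ a * b / (a * q + b * (1 - q)) ^ 2 := by
  wlog hab : a ≤ b generalizing a b q
  · have hq' : 1 - q ∈ Set.Icc (0 : ℝ) 1 := ⟨by linarith [hq.2], by linarith [hq.1]⟩
    have h := this hb ha hq' (le_of_not_ge hab)
    rwa [← inv_div, Real.log_inv, abs_neg, mul_comm b, sub_sub_cancel, add_comm] at h
  have hD := bayesUpdate_denom_pos ha hb hq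
  have hDb : a * q + b * (1 - q) ≤ b := by nlinarith [hq.1]
  rw [abs_of_nonpos (Real.log_nonpos (by positivity) ((div_le_one hb).mpr hab)), neg_neg,
    Real.exp_log (by positivity)]
  calc a / b = a * b / b ^ 2 := by field_simp
    _ ≤ a * b / (a * q + b * (1 - q)) ^ 2 := by gcongr

theorem mul_one_sub_bayesUpdate_ge (ha : 0 < a) (hb : 0 < b) (hq : q ∈ Set.Icc (0 : ℝ) 1) :
    q * (1 - q) * Real.exp (-|Real.log (a / b)|) ≤
      bayesUpdate a b q * (1 - bayesUpdate a b q) := by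
  rw [bayesUpdate_mul_one_sub ha hb hq]
  exact mul_le_mul_of_nonneg_left (exp_neg_abs_log_div_le ha hb hq)
    (mul_nonneg hq.1 (sub_nonneg.mpr hq.2))

end BayesUpdate

section Iterate

variable {n : ℕ} {q : ℕ → ℝ} {a b : Fin n → ℝ}

lemma bayesUpdate_iterate_mem_Icc (ha : ∀ i, 0 < a i) (hb : ∀ i, 0 < b i)
    (hq0 : q 0 ∈ Set.Icc (0 : ℝ) 1)
    (hrec : ∀ i : Fin n, q (i + 1) = bayesUpdate (a i) (b i) (q i))
    (i : Fin (n + 1)) : q i ∈ Set.Icc (0 : ℝ) 1 := by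
  induction i using Fin.induction with
  | zero => exact hq0
  | succ i ih => simpa [hrec i] using bayesUpdate_mem_Icc (ha i) (hb i) ih

theorem bayesUpdate_iterate_mul_one_sub_ge (ha : ∀ i, 0 < a i) (hb : ∀ i, 0 < b i)
    (hq0 : q 0 ∈ Set.Icc (0 : ℝ) 1)
    (hrec : ∀ i : Fin n, q (i + 1) = bayesUpdate (a i) (b i) (q i)) :
    q 0 * (1 - q 0) * Real.exp (-∑ i, |Real.log (a i / b i)|) ≤ q n * (1 - q n) := by
  induction n with
  | zero => simp
  | succ n ih =>
    have hqn : q n ∈ Set.Icc (0 : ℝ) 1 := by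
      simpa using bayesUpdate_iterate_mem_Icc ha hb hq0 hrec (Fin.last n).castSucc
    have hprev := ih (fun i => ha i.castSucc) (fun i => hb i.castSucc) (fun i => hrec i.castSucc)
    have hstep := mul_one_sub_bayesUpdate_ge (ha (Fin.last n)) (hb (Fin.last n)) hqn
    have hlast : q (n + 1) = bayesUpdate (a (Fin.last n)) (b (Fin.last n)) (q n) :=
      hrec (Fin.last n)
    rw [← hlast] at hstep
    rw [Fin.sum_univ_castSucc, neg_add, Real.exp_add, ← mul_assoc]
    exact (mul_le_mul_of_nonneg_right hprev (Real.exp_nonneg _)).trans hstep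

end Iterate

lemma measurable_bayesUpdate_iterate {Ω : Type*} [MeasurableSpace Ω] {n : ℕ}
    {q : ℕ → Ω → ℝ} {a b : Fin n → Ω → ℝ}
    (ha : ∀ i, Measurable (a i)) (hb : ∀ i, Measurable (b i))
    (hq0 : Measurable (q 0))
    (hrec : ∀ i : Fin n, ∀ ω, q (i + 1) ω = bayesUpdate (a i ω) (b i ω) (q i ω))
    (i : Fin (n + 1)) : Measurable (q i) := by
  induction i using Fin.induction with
  | zero => exact hq0
  | succ i ih =>
    have h : q (i + 1) = fun ω => bayesUpdate (a i ω) (b i ω) (q i ω) := funext (hrec i)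
    simp only [Fin.val_succ, Fin.val_castSucc, h, bayesUpdate] at ih ⊢
    fun_prop

lemma exp_neg_integral_le_integral_exp_neg {Ω : Type*} [MeasurableSpace Ω] {P : Measure Ω}
    [IsProbabilityMeasure P] {S : Ω → ℝ} (hS : Integrable S P) (hS0 : 0 ≤ S) :
    Real.exp (-∫ ω, S ω ∂P) ≤ ∫ ω, Real.exp (-S ω) ∂P := by
  have hexp : Integrable (fun ω => Real.exp (-S ω)) P := by
    refine .of_bound (Real.continuous_exp.comp_aestronglyMeasurable hS.neg.1) 1
      (Filter.Eventually.of_forall fun ω => ?_)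
    simpa [abs_of_nonneg (Real.exp_nonneg _)] using hS0 ω
  simpa [integral_neg] using convexOn_exp.map_integral_le Real.continuous_exp.continuousOn
    isClosed_univ (Filter.Eventually.of_forall fun ω => Set.mem_univ _) hS.neg hexp

lemma mul_exp_neg_integral_le_integral {Ω : Type*} [MeasurableSpace Ω] {P : Measure Ω}
    [IsProbabilityMeasure P] {S X : Ω → ℝ} {c : ℝ} (hc : 0 ≤ c) (hS : Integrable S P)
    (hS0 : 0 ≤ S) (hX : Integrable X P) (hle : ∀ ω, c * Real.exp (-S ω) ≤ X ω) :
    c * Real.exp (-∫ ω, S ω ∂P) ≤ ∫ ω, X ω ∂P :=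
  calc c * Real.exp (-∫ ω, S ω ∂P)
      ≤ c * ∫ ω, Real.exp (-S ω) ∂P := by
        gcongr
        exact exp_neg_integral_le_integral_exp_neg hS hS0
    _ = ∫ ω, c * Real.exp (-S ω) ∂P := (integral_const_mul _ _).symm
    _ ≤ ∫ ω, X ω ∂P :=
      integral_mono_of_nonneg (Filter.Eventually.of_forall fun ω => by positivity) hX
        (Filter.Eventually.of_forall hle)

lemma integrable_mul_one_sub_of_mem_Icc {Ω : Type*} [MeasurableSpace Ω] {P : Measure Ω}
    [IsFiniteMeasure P] {X : Ω → ℝ} (hX : Measurable X)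
    (hX01 : ∀ ω, X ω ∈ Set.Icc (0 : ℝ) 1) :
    Integrable (fun ω => X ω * (1 - X ω)) P := by
  refine .of_bound (hX.mul (measurable_const.sub hX)).aestronglyMeasurable 1
    (Filter.Eventually.of_forall fun ω => ?_)
  obtain ⟨h0, h1⟩ := hX01 ω
  rw [Real.norm_eq_abs, abs_le]
  constructor <;> nlinarith

lemma integral_sum_comp_of_map_eq {Ω E ι : Type*} [MeasurableSpace Ω] [MeasurableSpace E]
    [Fintype ι] {P : Measure Ω} {μ : Measure E} {Y : ι → Ω → E} {g : E → ℝ}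
    (hY : ∀ i, Measurable (Y i)) (hlaw : ∀ i, Measure.map (Y i) P = μ)
    (hg : Integrable g μ) :
    ∫ ω, ∑ i, g (Y i ω) ∂P = Fintype.card ι * ∫ e, g e ∂μ := by
  have hcomp (i : ι) : ∫ ω, g (Y i ω) ∂P = ∫ e, g e ∂μ := by
    rw [← hlaw i, integral_map (hY i).aemeasurable (hlaw i ▸ hg.1)]
  rw [integral_finsetSum _ fun i _ => (hlaw i ▸ hg).comp_measurable (hY i)]
  simp [hcomp]

theorem stmt_2_general {Ω : Type*} [MeasurableSpace Ω] (P : Measure Ω) [IsProbabilityMeasure P]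
    {E : Type*} [MeasurableSpace E] (μ : Measure E) [IsProbabilityMeasure μ]
    (t : ℕ) (Y : Fin t → Ω → E)
    (hmeas : ∀ i, Measurable (Y i))
    (hlaw : ∀ i, Measure.map (Y i) P = μ)
    (f0 f1 : E → ℝ) (hf0m : Measurable f0) (hf1m : Measurable f1)
    (hf0 : ∀ e, 0 < f0 e) (hf1 : ∀ e, 0 < f1 e)
    (hint : Integrable (fun e => |Real.log (f1 e / f0 e)|) μ)
    (p0 : ℝ) (hp0 : p0 ∈ Set.Icc (0 : ℝ) 1)
    (p : ℕ → Ω → ℝ) (hpzero : ∀ ω, p 0 ω = p0)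
    (hrec : ∀ i : Fin t, ∀ ω, p ((i : ℕ) + 1) ω =
      f1 (Y i ω) * p (i : ℕ) ω /
        (f1 (Y i ω) * p (i : ℕ) ω + f0 (Y i ω) * (1 - p (i : ℕ) ω))) :
    ∫ ω, p t ω * (1 - p t ω) ∂P
      ≥ p0 * (1 - p0) * Real.exp (-(t : ℝ) * ∫ e, |Real.log (f1 e / f0 e)| ∂μ) := by
  set L : E → ℝ := fun e => |Real.log (f1 e / f0 e)|
  have hpath (ω : Ω) :
      p0 * (1 - p0) * Real.exp (-∑ i, L (Y i ω)) ≤ p t ω * (1 - p t ω) := by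
    simpa [hpzero] using bayesUpdate_iterate_mul_one_sub_ge (q := fun j => p j ω)
      (fun i => hf1 (Y i ω)) (fun i => hf0 (Y i ω)) (by simpa [hpzero]) (fun i => hrec i ω)
  have hpt_mem (ω : Ω) : p t ω ∈ Set.Icc (0 : ℝ) 1 := by
    simpa using bayesUpdate_iterate_mem_Icc (q := fun j => p j ω)
      (fun i => hf1 (Y i ω)) (fun i => hf0 (Y i ω)) (by simpa [hpzero]) (fun i => hrec i ω)
      (Fin.last t)
  have hpt_meas : Measurable (p t) := by
    simpa using measurable_bayesUpdate_iterate (fun i => hf1m.comp (hmeas i))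
      (fun i => hf0m.comp (hmeas i)) (by simp [funext hpzero]) hrec (Fin.last t)
  have hS : ∫ ω, ∑ i, L (Y i ω) ∂P = t * ∫ e, L e ∂μ := by
    simpa using integral_sum_comp_of_map_eq hmeas hlaw hint
  rw [ge_iff_le, neg_mul, ← hS]
  exact mul_exp_neg_integral_le_integral (mul_nonneg hp0.1 (sub_nonneg.mpr hp0.2))
    (integrable_finsetSum _ fun i _ => (hlaw i ▸ hint).comp_measurable (hmeas i))
    (fun ω => Finset.sum_nonneg fun i _ => abs_nonneg _)
    (integrable_mul_one_sub_of_mem_Icc hpt_meas hpt_mem) hpath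

/-- Corollary 1 of the appendix: after `t` i.i.d. noisy observations `Y_1, …, Y_t` with
common law `μ`, the expected posterior variance of a bit updated by Bayes rule with
likelihoods `f1, f0` satisfies
`E[p_t (1 − p_t)] ≥ p_0 (1 − p_0) exp(−t ∫ |ln(f1/f0)| dμ)`. -/
theorem stmt_2 {Ω : Type*} [MeasurableSpace Ω] (P : Measure Ω) [IsProbabilityMeasure P]
    {E : Type*} [MeasurableSpace E] (μ : Measure E) [IsProbabilityMeasure μ]
    (t : ℕ) (ht : 1 ≤ t) (Y : Fin t → Ω → E)
    (hmeas : ∀ i, Measurable (Y i))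
    (hlaw : ∀ i, Measure.map (Y i) P = μ)
    (hindep : iIndepFun Y P)
    (f0 f1 : E → ℝ) (hf0m : Measurable f0) (hf1m : Measurable f1)
    (hf0 : ∀ e, 0 < f0 e) (hf1 : ∀ e, 0 < f1 e)
    (hint : Integrable (fun e => |Real.log (f1 e / f0 e)|) μ)
    (p0 : ℝ) (hp0 : p0 ∈ Set.Icc (0 : ℝ) 1)
    (p : ℕ → Ω → ℝ) (hpzero : ∀ ω, p 0 ω = p0)
    (hrec : ∀ i : Fin t, ∀ ω, p ((i : ℕ) + 1) ω =
      f1 (Y i ω) * p (i : ℕ) ω /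
        (f1 (Y i ω) * p (i : ℕ) ω + f0 (Y i ω) * (1 - p (i : ℕ) ω))) :
    ∫ ω, p t ω * (1 - p t ω) ∂P
      ≥ p0 * (1 - p0) * Real.exp (-(t : ℝ) * ∫ e, |Real.log (f1 e / f0 e)| ∂μ) :=
  stmt_2_general P μ t Y hmeas hlaw f0 f1 hf0m hf1m hf0 hf1 hint p0 hp0 p hpzero hrec
end

section
/- Let E be a countable set, let f0, f1 : E → (0,1] be probability mass functions on E, and let t ≥ 1. On a probability space carry a random bit X with P(X=1) = P(X=0) = 1/2 and E-valued random variables Y_1,…,Y_t that are conditionally i.i.d. given X, with conditional pmf f1 if X = 1 and f0 if X = 0. For y ∈ E^t with P(Y=y) > 0 let p_y = P(X=1 | Y=y). Then ∑_{y ∈ E^t} P(Y=y)·p_y·(1−p_y) ≤ exp(−t·C), where C = −ln min_{s∈[0,1]} ∑_{e∈E} f0(e)^s·f1(e)^{1−s}. -/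
open MeasureTheory

lemma aux_hasSum_pi {E : Type*} (h : E → ℝ) (h0 : ∀ e, 0 ≤ h e) {S : ℝ} (hS : HasSum h S) :
    ∀ n : ℕ, HasSum (fun y : Fin n → E => ∏ i, h (y i)) (S ^ n) := by
  intro n
  induction n with
  | zero =>
    have : HasSum (fun y : Fin 0 → E => ∏ i, h (y i)) (∏ i : Fin 0, h ((fun i => i.elim0) i)) :=
      hasSum_single _ (fun b hb => absurd (funext fun i => i.elim0) hb)
    simpa using this
  | succ n ih =>
    have h0' : (0 : E → ℝ) ≤ h := h0
    have h0'' : (0 : (Fin n → E) → ℝ) ≤ fun y : Fin n → E => ∏ i, h (y i) :=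
      fun y => Finset.prod_nonneg fun i _ => h0 _
    have hsum2 : Summable (fun p : E × (Fin n → E) => h p.1 * ∏ i, h (p.2 i)) :=
      Summable.mul_of_nonneg (f := h) (g := fun y : Fin n → E => ∏ i, h (y i))
        hS.summable ih.summable h0' h0''
    have key : HasSum (fun p : E × (Fin n → E) => h p.1 * ∏ i, h (p.2 i)) (S * S ^ n) :=
      HasSum.mul (f := h) (g := fun y : Fin n → E => ∏ i, h (y i)) hS ih hsum2
    have := ((Fin.consEquiv (fun _ : Fin (n + 1) => E)).hasSum_iff
      (f := fun y : Fin (n + 1) → E => ∏ i, h (y i)) (a := S * S ^ n)).mp ?_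
    · simpa [pow_succ, mul_comm] using this
    · convert key using 1
      funext p
      simp [Fin.consEquiv, Fin.prod_univ_succ]

lemma aux_le_pow_sInf {S : Set ℝ} (hne : S.Nonempty) (hpos : ∀ v ∈ S, 0 ≤ v) {L : ℝ}
    (hL : 0 ≤ L) {t : ℕ} (ht : t ≠ 0) (hb : ∀ v ∈ S, L ≤ v ^ t) : L ≤ (sInf S) ^ t := by
  have htR : (t : ℝ) ≠ 0 := Nat.cast_ne_zero.mpr ht
  have hL'le : ∀ v ∈ S, L ^ ((t : ℝ)⁻¹) ≤ v := by
    intro v hv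
    have hv0 := hpos v hv
    have h2 := Real.rpow_le_rpow hL (hb v hv) (by positivity : (0:ℝ) ≤ (t : ℝ)⁻¹)
    rwa [← Real.rpow_natCast v t, ← Real.rpow_mul hv0, mul_inv_cancel₀ htR,
      Real.rpow_one] at h2
  have h1 : L ^ ((t : ℝ)⁻¹) ≤ sInf S := le_csInf hne hL'le
  have h2 : L = (L ^ ((t : ℝ)⁻¹)) ^ t := by
    rw [← Real.rpow_natCast (L ^ ((t:ℝ)⁻¹)) t, ← Real.rpow_mul hL,
      inv_mul_cancel₀ htR, Real.rpow_one]
  rw [h2]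
  exact pow_le_pow_left₀ (Real.rpow_nonneg hL _) h1 t

/-- Per-bit upper bound of Theorem 1: for a uniform bit `X` observed through `t`
conditionally i.i.d. channel outputs with pmfs `f1` (bit 1) and `f0` (bit 0), the expected
posterior variance `∑_y P(Y=y)·p_y·(1−p_y)` is at most `exp(−t·C)`, where `C` is the
Chernoff information `−ln min_{s∈[0,1]} ∑_e f0(e)^s f1(e)^{1−s}`. -/
theorem stmt_5 {E : Type*} [Countable E] (f0 f1 : E → ℝ)
    (hf0pos : ∀ e, 0 < f0 e) (hf0le : ∀ e, f0 e ≤ 1) (hf0sum : ∑' e, f0 e = 1)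
    (hf1pos : ∀ e, 0 < f1 e) (hf1le : ∀ e, f1 e ≤ 1) (hf1sum : ∑' e, f1 e = 1)
    (t : ℕ) (ht : 1 ≤ t)
    {Ω : Type*} [MeasurableSpace Ω] (P : Measure Ω) [IsProbabilityMeasure P]
    (X : Ω → Bool) (Y : Ω → Fin t → E)
    (hjoint : ∀ (x : Bool) (y : Fin t → E),
      (P {ω | X ω = x ∧ Y ω = y}).toReal
        = (1 / 2) * ∏ i, (if x then f1 else f0) (y i)) :
    ∑' y : Fin t → E,
        (P {ω | Y ω = y}).toReal *
          (((P {ω | X ω = true ∧ Y ω = y}).toReal / (P {ω | Y ω = y}).toReal) *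
            (1 - (P {ω | X ω = true ∧ Y ω = y}).toReal / (P {ω | Y ω = y}).toReal))
      ≤ Real.exp (-(t : ℝ) *
          (-Real.log (sInf ((fun s : ℝ => ∑' e, f0 e ^ s * f1 e ^ (1 - s)) ''
            Set.Icc (0 : ℝ) 1)))) := by
  classical
  -- summability of the channel pmfs
  have hf0s : Summable f0 := by
    by_contra hc; rw [tsum_eq_zero_of_not_summable hc] at hf0sum; norm_num at hf0sum
  have hf1s : Summable f1 := by
    by_contra hc; rw [tsum_eq_zero_of_not_summable hc] at hf1sum; norm_num at hf1sum
  obtain ⟨e0⟩ : Nonempty E := by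
    by_contra hc
    rw [not_nonempty_iff] at hc
    rw [tsum_empty] at hf0sum; norm_num at hf0sum
  set g : ℝ → ℝ := fun s : ℝ => ∑' e, f0 e ^ s * f1 e ^ (1 - s) with hgdef
  -- summability of the Chernoff summand for s ∈ [0,1]
  have hsummand : ∀ s ∈ Set.Icc (0:ℝ) 1, Summable (fun e => f0 e ^ s * f1 e ^ (1 - s)) := by
    intro s hs
    refine Summable.of_nonneg_of_le
      (fun e => mul_nonneg (Real.rpow_nonneg (hf0pos e).le _) (Real.rpow_nonneg (hf1pos e).le _))
      (fun e => ?_) (hf0s.add hf1s)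
    have h01 : f0 e ^ s * f1 e ^ (1 - s) ≤ (f0 e + f1 e) ^ s * (f0 e + f1 e) ^ (1 - s) := by
      have l1 : f0 e ^ s ≤ (f0 e + f1 e) ^ s :=
        Real.rpow_le_rpow (hf0pos e).le (by linarith [hf1pos e]) hs.1
      have l2 : f1 e ^ (1 - s) ≤ (f0 e + f1 e) ^ (1 - s) :=
        Real.rpow_le_rpow (hf1pos e).le (by linarith [hf0pos e]) (by linarith [hs.2])
      exact mul_le_mul l1 l2 (Real.rpow_nonneg (hf1pos e).le _)
        (Real.rpow_nonneg (by linarith [hf0pos e, hf1pos e]) _)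
    calc f0 e ^ s * f1 e ^ (1 - s) ≤ (f0 e + f1 e) ^ s * (f0 e + f1 e) ^ (1 - s) := h01
      _ = (f0 e + f1 e) ^ (s + (1 - s)) :=
          (Real.rpow_add (by linarith [hf0pos e, hf1pos e]) _ _).symm
      _ = f0 e + f1 e := by norm_num
  -- lower bound on g
  have hgc : ∀ s ∈ Set.Icc (0:ℝ) 1, f0 e0 * f1 e0 ≤ g s := by
    intro s hs
    have l1 : f0 e0 ≤ f0 e0 ^ s := by
      have := Real.rpow_le_rpow_of_exponent_ge (hf0pos e0) (hf0le e0) hs.2 (y := 1)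
      rwa [Real.rpow_one] at this
    have l2 : f1 e0 ≤ f1 e0 ^ (1 - s) := by
      have := Real.rpow_le_rpow_of_exponent_ge (hf1pos e0) (hf1le e0)
        (by linarith [hs.1] : 1 - s ≤ 1) (y := 1)
      rwa [Real.rpow_one] at this
    have h1 : f0 e0 * f1 e0 ≤ f0 e0 ^ s * f1 e0 ^ (1 - s) :=
      mul_le_mul l1 l2 (hf1pos e0).le (Real.rpow_nonneg (hf0pos e0).le _)
    exact h1.trans (Summable.le_tsum (hsummand s hs) e0 (fun e' _ =>
      mul_nonneg (Real.rpow_nonneg (hf0pos e').le _) (Real.rpow_nonneg (hf1pos e').le _)))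
  have hne : (g '' Set.Icc (0:ℝ) 1).Nonempty :=
    ⟨g 0, Set.mem_image_of_mem g (by norm_num : (0:ℝ) ∈ Set.Icc (0:ℝ) 1)⟩
  have hmem_nonneg : ∀ v ∈ g '' Set.Icc (0:ℝ) 1, 0 ≤ v := by
    rintro v ⟨s, hs, rfl⟩
    exact le_trans (mul_pos (hf0pos e0) (hf1pos e0)).le (hgc s hs)
  have hIpos : 0 < sInf (g '' Set.Icc (0:ℝ) 1) := by
    have : f0 e0 * f1 e0 ≤ sInf (g '' Set.Icc (0:ℝ) 1) := by
      apply le_csInf hne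
      rintro v ⟨s, hs, rfl⟩
      exact hgc s hs
    have hc : 0 < f0 e0 * f1 e0 := mul_pos (hf0pos e0) (hf1pos e0)
    linarith
  -- rewrite the RHS as (sInf ...) ^ t
  have hRHS : Real.exp (-(t : ℝ) * (-Real.log (sInf (g '' Set.Icc (0:ℝ) 1))))
      = (sInf (g '' Set.Icc (0:ℝ) 1)) ^ t := by
    rw [neg_mul_neg, Real.exp_nat_mul, Real.exp_log hIpos]
  rw [hRHS]
  -- notation for the joint quantities
  set A : (Fin t → E) → ℝ := fun y => (P {ω | X ω = true ∧ Y ω = y}).toReal with hAdef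
  set B : (Fin t → E) → ℝ := fun y => (P {ω | X ω = false ∧ Y ω = y}).toReal with hBdef
  set M : (Fin t → E) → ℝ := fun y => (P {ω | Y ω = y}).toReal with hMdef
  have hA : ∀ y, A y = (1/2) * ∏ i, f1 (y i) := fun y => by simpa using hjoint true y
  have hB : ∀ y, B y = (1/2) * ∏ i, f0 (y i) := fun y => by simpa using hjoint false y
  have hApos : ∀ y, 0 < A y := fun y => by
    rw [hA]; exact mul_pos (by norm_num) (Finset.prod_pos fun i _ => hf1pos _)
  have hBpos : ∀ y, 0 < B y := fun y => by
    rw [hB]; exact mul_pos (by norm_num) (Finset.prod_pos fun i _ => hf0pos _)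
  have hAM : ∀ y, A y ≤ M y := fun y =>
    ENNReal.toReal_mono (measure_ne_top P _) (measure_mono (fun ω hω => hω.2))
  have hBM : ∀ y, B y ≤ M y := fun y =>
    ENNReal.toReal_mono (measure_ne_top P _) (measure_mono (fun ω hω => hω.2))
  have hMpos : ∀ y, 0 < M y := fun y => lt_of_lt_of_le (hApos y) (hAM y)
  have hMAB : ∀ y, M y ≤ A y + B y := by
    intro y
    have hsub : {ω | Y ω = y} ⊆ {ω | X ω = true ∧ Y ω = y} ∪ {ω | X ω = false ∧ Y ω = y} := by
      intro ω hω
      cases hX : X ω with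
      | true => exact Or.inl ⟨hX, hω⟩
      | false => exact Or.inr ⟨hX, hω⟩
    have h1 : P {ω | Y ω = y} ≤ P {ω | X ω = true ∧ Y ω = y} + P {ω | X ω = false ∧ Y ω = y} :=
      (measure_mono hsub).trans (measure_union_le _ _)
    have h2 := ENNReal.toReal_mono
      (ENNReal.add_ne_top.mpr ⟨measure_ne_top P _, measure_ne_top P _⟩) h1
    rwa [ENNReal.toReal_add (measure_ne_top P _) (measure_ne_top P _)] at h2
  -- nonnegativity of each term
  have htermnonneg : ∀ y, 0 ≤ M y * (A y / M y * (1 - A y / M y)) := by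
    intro y
    apply mul_nonneg (hMpos y).le
    apply mul_nonneg (div_nonneg (hApos y).le (hMpos y).le)
    rw [sub_nonneg]
    exact (div_le_one (hMpos y)).mpr (hAM y)
  -- main bound: for each s ∈ [0,1], LHS ≤ (g s) ^ t
  have hmain : ∀ v ∈ g '' Set.Icc (0:ℝ) 1,
      (∑' y : Fin t → E, M y * (A y / M y * (1 - A y / M y))) ≤ v ^ t := by
    rintro v ⟨s, hs, rfl⟩
    have hbnd : HasSum (fun y : Fin t → E => ∏ i, (f0 (y i) ^ s * f1 (y i) ^ (1 - s)))
        ((g s) ^ t) :=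
      aux_hasSum_pi _ (fun e =>
        mul_nonneg (Real.rpow_nonneg (hf0pos e).le _) (Real.rpow_nonneg (hf1pos e).le _))
        (hsummand s hs).hasSum t
    have hbnd2 : HasSum (fun y : Fin t → E =>
        (1/2) * ∏ i, (f0 (y i) ^ s * f1 (y i) ^ (1 - s))) ((1/2) * (g s) ^ t) :=
      hbnd.mul_left _
    have hper : ∀ y : Fin t → E, M y * (A y / M y * (1 - A y / M y))
        ≤ (1/2) * ∏ i, (f0 (y i) ^ s * f1 (y i) ^ (1 - s)) := by
      intro y
      have hm0 := hMpos y
      have ha0 := hApos y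
      have hb0 := hBpos y
      have key : M y * (A y / M y * (1 - A y / M y)) = A y * (M y - A y) / M y := by
        field_simp
      have h1 : A y * (M y - A y) / M y ≤ A y * B y / M y :=
        (div_le_div_iff_of_pos_right hm0).mpr
          (mul_le_mul_of_nonneg_left (by linarith [hMAB y]) ha0.le)
      have e1 : A y ^ s * B y ^ (1 - s) ≤ M y := by
        calc A y ^ s * B y ^ (1 - s)
            ≤ M y ^ s * M y ^ (1 - s) :=
              mul_le_mul (Real.rpow_le_rpow ha0.le (hAM y) hs.1)
                (Real.rpow_le_rpow hb0.le (hBM y) (by linarith [hs.2]))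
                (Real.rpow_nonneg hb0.le _) (Real.rpow_nonneg hm0.le _)
          _ = M y ^ (s + (1 - s)) := (Real.rpow_add hm0 _ _).symm
          _ = M y := by norm_num
      have e2 : A y * B y = (A y ^ (1 - s) * B y ^ s) * (A y ^ s * B y ^ (1 - s)) := by
        rw [mul_mul_mul_comm, ← Real.rpow_add ha0, ← Real.rpow_add hb0]
        norm_num
      have h2 : A y * B y / M y ≤ A y ^ (1 - s) * B y ^ s := by
        rw [div_le_iff₀ hm0, e2]
        exact mul_le_mul_of_nonneg_left e1
          (mul_nonneg (Real.rpow_nonneg ha0.le _) (Real.rpow_nonneg hb0.le _))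
      have h3 : A y ^ (1 - s) * B y ^ s
          = (1/2) * ∏ i, (f0 (y i) ^ s * f1 (y i) ^ (1 - s)) := by
        rw [hA, hB,
          Real.mul_rpow (by norm_num) (Finset.prod_nonneg fun i _ => (hf1pos _).le),
          Real.mul_rpow (by norm_num) (Finset.prod_nonneg fun i _ => (hf0pos _).le),
          ← Real.finset_prod_rpow _ _ (fun i _ => (hf1pos _).le),
          ← Real.finset_prod_rpow _ _ (fun i _ => (hf0pos _).le)]
        rw [show ((1:ℝ)/2) ^ (1 - s) * (∏ i, f1 (y i) ^ (1 - s)) *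
            (((1:ℝ)/2) ^ s * ∏ i, f0 (y i) ^ s)
          = (((1:ℝ)/2) ^ (1 - s) * ((1:ℝ)/2) ^ s) *
            ((∏ i, f0 (y i) ^ s) * ∏ i, f1 (y i) ^ (1 - s)) by ring]
        rw [← Real.rpow_add (by norm_num : (0:ℝ) < 1/2), ← Finset.prod_mul_distrib]
        norm_num
      rw [key, ← h3]
      exact h1.trans h2
    have hsummLHS : Summable (fun y : Fin t → E => M y * (A y / M y * (1 - A y / M y))) :=
      Summable.of_nonneg_of_le htermnonneg hper hbnd2.summable
    calc ∑' y : Fin t → E, M y * (A y / M y * (1 - A y / M y))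
        ≤ ∑' y : Fin t → E, (1/2) * ∏ i, (f0 (y i) ^ s * f1 (y i) ^ (1 - s)) :=
          Summable.tsum_le_tsum hper hsummLHS hbnd2.summable
      _ = (1/2) * (g s) ^ t := hbnd2.tsum_eq
      _ ≤ (g s) ^ t := by
          have : (0:ℝ) ≤ (g s) ^ t :=
            pow_nonneg (le_trans (mul_pos (hf0pos e0) (hf1pos e0)).le (hgc s hs)) t
          linarith
  exact aux_le_pow_sInf hne hmem_nonneg
    (tsum_nonneg htermnonneg) (by omega) hmain
end

section
/- Fix a real constant c > 0 and an integer n ≥ 1, and define, for any map t : {1,2,…} → ℕ, U_c(t) = ∑_{k=1}^∞ 4^{−k}·exp(−t_k·c). Suppose t is a transmission policy of length n (i.e. ∑_{k≥1} t_k = n) that is efficient for c (i.e. U_c(t) ≤ U_c(t') for every transmission policy t' of length n). Then for all indices k1 < k2, if t_{k2} ≥ 1 then t_{k1} ≥ 1. -/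
/-- Upper bound on the end-to-end distortion of a transmission pattern `t : {1,2,…} → ℕ`
(indexed here by `k ↦ t (k+1)`): `U_c(t) = ∑_{k≥1} 4^{−k} exp(−t_k c)`. -/
noncomputable def distortionUB (c : ℝ) (t : ℕ → ℕ) : ℝ :=
  ∑' k : ℕ, (4 : ℝ)⁻¹ ^ (k + 1) * Real.exp (-(t (k + 1) : ℝ) * c)

/-- A transmission policy of length `n`: `∑_{k≥1} t_k = n`. -/
def IsPolicy (n : ℕ) (t : ℕ → ℕ) : Prop :=
  (∑' k : ℕ, (t (k + 1) : ENNReal)) = n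

/-- A policy of length `n` is efficient for `c` if it minimizes `U_c` among all policies
of length `n`. -/
def IsEfficient (c : ℝ) (n : ℕ) (t : ℕ → ℕ) : Prop :=
  IsPolicy n t ∧ ∀ t' : ℕ → ℕ, IsPolicy n t' → distortionUB c t ≤ distortionUB c t'

private lemma extract2 (a : ℕ → ENNReal) {j1 j2 : ℕ} (h : j1 ≠ j2) :
    ∑' k, a k = a j1 + a j2 + ∑' k, (if k = j1 ∨ k = j2 then 0 else a k) := by
  rw [ENNReal.tsum_eq_add_tsum_ite (f := a) j1, ENNReal.tsum_eq_add_tsum_ite j2,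
    if_neg (Ne.symm h), ← add_assoc]
  congr 1
  apply tsum_congr
  intro k
  by_cases h1 : k = j1 <;> by_cases h2 : k = j2 <;> simp [h1, h2]

private lemma dsummable (c : ℝ) (hc : 0 < c) (s : ℕ → ℕ) :
    Summable (fun k : ℕ => (4 : ℝ)⁻¹ ^ (k + 1) * Real.exp (-(s (k + 1) : ℝ) * c)) := by
  have hg : Summable (fun k : ℕ => (4 : ℝ)⁻¹ ^ k) :=
    summable_geometric_of_lt_one (by norm_num) (by norm_num)
  refine Summable.of_nonneg_of_le (fun k => by positivity) (fun k => ?_) hg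
  · have h1 : Real.exp (-(s (k + 1) : ℝ) * c) ≤ 1 := by
      rw [Real.exp_le_one_iff]
      have : (0 : ℝ) ≤ (s (k + 1) : ℝ) := Nat.cast_nonneg _
      nlinarith
    calc (4 : ℝ)⁻¹ ^ (k + 1) * Real.exp (-(s (k + 1) : ℝ) * c)
        ≤ (4 : ℝ)⁻¹ ^ (k + 1) * 1 := by
          apply mul_le_mul_of_nonneg_left h1 (by positivity)
      _ ≤ (4 : ℝ)⁻¹ ^ k := by
          rw [mul_one]
          apply pow_le_pow_of_le_one (by norm_num) (by norm_num) (by omega)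

/-- First bullet of Lemma 1: an efficient policy has no gaps among transmitted bit
indices, i.e. if `k1 < k2` and `t_{k2} ≥ 1` then `t_{k1} ≥ 1`. -/
theorem stmt_8 (c : ℝ) (hc : 0 < c) (n : ℕ) (hn : 1 ≤ n) (t : ℕ → ℕ)
    (heff : IsEfficient c n t) :
    ∀ k1 k2 : ℕ, 1 ≤ k1 → k1 < k2 → 1 ≤ t k2 → 1 ≤ t k1 := by
  intro k1 k2 hk1 hlt hk2
  by_contra h0
  have ht1 : t k1 = 0 := by omega
  set m := t k2 with hm
  have hm1 : 1 ≤ m := hk2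
  set t' : ℕ → ℕ := fun j => if j = k1 then 1 else if j = k2 then m - 1 else t j with ht'
  obtain ⟨j1, hj1⟩ : ∃ j, j + 1 = k1 := ⟨k1 - 1, by omega⟩
  obtain ⟨j2, hj2⟩ : ∃ j, j + 1 = k2 := ⟨k2 - 1, by omega⟩
  have hjne : j1 ≠ j2 := by omega
  have hkne : k1 ≠ k2 := by omega
  have ht'k1 : t' k1 = 1 := by simp [ht']
  have ht'k2 : t' k2 = m - 1 := by simp [ht', Ne.symm hkne]
  -- t' is a policy of length n
  have hpol : IsPolicy n t' := by
    have e1 := extract2 (fun k => ((t' (k + 1) : ENNReal))) hjne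
    have e2 := extract2 (fun k => ((t (k + 1) : ENNReal))) hjne
    unfold IsPolicy
    rw [e1, ← heff.1, e2]
    congr 1
    · simp only [hj1, hj2, ht'k1, ht'k2, ht1]
      rw [← Nat.cast_add, ← Nat.cast_add]
      congr 1
      omega
    · apply tsum_congr
      intro k
      by_cases h1 : k = j1
      · simp [h1]
      · by_cases h2 : k = j2
        · simp [h2]
        · have e1 : k + 1 ≠ k1 := by omega
          have e2 : k + 1 ≠ k2 := by omega
          simp [h1, h2, ht', e1, e2]
  -- strict decrease of distortion
  set A := (4 : ℝ)⁻¹ ^ k1 with hA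
  set B := (4 : ℝ)⁻¹ ^ k2 with hB
  set E := Real.exp (-((m : ℝ) - 1) * c) with hE
  set x := Real.exp (-c) with hx
  have hEx : Real.exp (-(m : ℝ) * c) = E * x := by
    rw [hE, hx, ← Real.exp_add]
    ring_nf
  have hlt' : distortionUB c t' < distortionUB c t := by
    have hcast : ((m - 1 : ℕ) : ℝ) = (m : ℝ) - 1 := by
      push_cast [hm1]; ring
    have hd : distortionUB c t' - distortionUB c t =
        (A * x - A) + (B * E - B * (E * x)) := by
      unfold distortionUB
      rw [← Summable.tsum_sub (dsummable c hc t') (dsummable c hc t)]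
      rw [tsum_eq_sum (s := {j1, j2}) ?_]
      · rw [Finset.sum_insert (by simp [hjne]), Finset.sum_singleton]
        simp only [hj1, hj2, ht'k1, ht'k2, ht1, hcast, Nat.cast_one, Nat.cast_zero]
        rw [hEx, show (-(1:ℝ) * c) = -c from by ring, show (-(0:ℝ) * c) = (0:ℝ) from by ring,
          Real.exp_zero]
        ring
      · intro b hb
        simp only [Finset.mem_insert, Finset.mem_singleton, not_or] at hb
        have e1 : b + 1 ≠ k1 := by omega
        have e2 : b + 1 ≠ k2 := by omega
        simp [ht', e1, e2]
    have hx1 : x < 1 := by rw [hx]; exact Real.exp_lt_one_iff.mpr (by linarith)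
    have hE1 : E ≤ 1 := by
      rw [hE, Real.exp_le_one_iff]
      have : (1 : ℝ) ≤ (m : ℝ) := by exact_mod_cast hm1
      nlinarith
    have hE0 : 0 < E := Real.exp_pos _
    have hBA : B < A := by
      rw [hA, hB]
      exact pow_lt_pow_right_of_lt_one₀ (by norm_num) (by norm_num) hlt
    have hB0 : 0 < B := by positivity
    have hBE : B * E < A := lt_of_le_of_lt (mul_le_of_le_one_right hB0.le hE1) hBA
    have key := mul_pos (sub_pos.mpr hx1) (sub_pos.mpr hBE)
    have hneg : (A * x - A) + (B * E - B * (E * x)) < 0 := by nlinarith [key]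
    linarith
  exact absurd (heff.2 t' hpol) (not_le.mpr hlt')
end

section
/- Fix a real constant c > 0, set r = ln(4)/c, and fix an integer n ≥ 1. Define, for any map t : {1,2,…} → ℕ, U_c(t) = ∑_{k=1}^∞ 4^{−k}·exp(−t_k·c). Suppose t is a transmission policy of length n (∑_{k≥1} t_k = n) that is efficient for c (U_c(t) ≤ U_c(t') for every transmission policy t' of length n). Then for all indices k1, k2 ≥ 1 with t_{k1} ≥ 1 and t_{k2} ≥ 1, one has (k2 − k1)·r − 1 ≤ t_{k1} − t_{k2} ≤ (k2 − k1)·r + 1 (as inequalities between real numbers). -/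
open Real Function
open scoped ENNReal

/-- The `(k₁, k₂)`-move of a policy. -/
def moveTransmission (t : ℕ → ℕ) (k₁ k₂ : ℕ) : ℕ → ℕ :=
  update (update t k₁ (t k₁ + 1)) k₂ (t k₂ - 1)

section Policy

variable {t : ℕ → ℕ} {k₁ k₂ : ℕ}

theorem moveTransmission_add_single (hne : k₁ ≠ k₂) (h : 1 ≤ t k₂) :
    moveTransmission t k₁ k₂ + Pi.single k₂ 1 = t + Pi.single k₁ 1 := by
  funext k
  simp only [moveTransmission, Pi.add_apply, update_apply, Pi.single_apply]
  split_ifs <;> subst_vars <;> omega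

theorem tsum_natCast_single_succ {j : ℕ} (hj : 1 ≤ j) :
    ∑' k : ℕ, (((Pi.single j 1 : ℕ → ℕ) (k + 1) : ℕ) : ℝ≥0∞) = 1 := by
  obtain ⟨i, rfl⟩ := Nat.exists_eq_add_of_le' hj
  simp [Pi.single_apply]

theorem IsPolicy.moveTransmission {n : ℕ} (ht : IsPolicy n t) (hne : k₁ ≠ k₂) (hk₁ : 1 ≤ k₁)
    (hk₂ : 1 ≤ k₂) (h : 1 ≤ t k₂) : IsPolicy n (moveTransmission t k₁ k₂) := by
  have hsum := congrArg (fun f : ℕ → ℕ => ∑' k, (f (k + 1) : ℝ≥0∞))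
    (moveTransmission_add_single hne h)
  simp only [Pi.add_apply, Nat.cast_add, ENNReal.tsum_add, tsum_natCast_single_succ hk₁,
    tsum_natCast_single_succ hk₂] at hsum
  rw [IsPolicy, ← ht]
  exact (ENNReal.add_left_inj ENNReal.one_ne_top).mp hsum

end Policy

section Distortion

variable {c : ℝ}

theorem summable_distortion_terms (hc : 0 ≤ c) (t : ℕ → ℕ) :
    Summable fun k : ℕ => (4 : ℝ)⁻¹ ^ (k + 1) * exp (-(t (k + 1) : ℝ) * c) := by
  refine Summable.of_nonneg_of_le (fun k => by positivity) (fun k => ?_)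
    ((summable_geometric_of_lt_one (r := (4 : ℝ)⁻¹) (by norm_num) (by norm_num)).mul_left (4 : ℝ)⁻¹)
  rw [pow_succ']
  refine mul_le_of_le_one_right (by positivity) (exp_le_one_iff.mpr ?_)
  nlinarith [(t (k + 1)).cast_nonneg (α := ℝ)]

theorem distortionUB_update (hc : 0 ≤ c) (t : ℕ → ℕ) {j : ℕ} (hj : 1 ≤ j) (m : ℕ) :
    distortionUB c (update t j m) =
      distortionUB c t + (4 : ℝ)⁻¹ ^ j * (exp (-(m : ℝ) * c) - exp (-(t j : ℝ) * c)) := by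
  obtain ⟨i, rfl⟩ := Nat.exists_eq_add_of_le' hj
  have hupd : (fun k : ℕ => (4 : ℝ)⁻¹ ^ (k + 1) * exp (-(update t (i + 1) m (k + 1) : ℝ) * c)) =
      update (fun k : ℕ => (4 : ℝ)⁻¹ ^ (k + 1) * exp (-(t (k + 1) : ℝ) * c)) i
        ((4 : ℝ)⁻¹ ^ (i + 1) * exp (-(m : ℝ) * c)) := by
    funext k
    by_cases hk : k = i
    · subst hk; simp
    · simp [update_of_ne hk, update_of_ne (show k + 1 ≠ i + 1 by omega)]
  rw [distortionUB, distortionUB, hupd,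
    ((summable_distortion_terms hc t).hasSum.update i _).tsum_eq]
  ring

theorem inv_four_pow_mul_exp (k : ℕ) (x : ℝ) :
    (4 : ℝ)⁻¹ ^ k * exp x = exp (x - k * log 4) := by
  rw [exp_sub, exp_nat_mul, exp_log (by norm_num), inv_pow, div_eq_mul_inv, mul_comm]

theorem distortionUB_moveTransmission (hc : 0 ≤ c) {t : ℕ → ℕ} {k₁ k₂ : ℕ} (hne : k₁ ≠ k₂)
    (hk₁ : 1 ≤ k₁) (hk₂ : 1 ≤ k₂) (h : 1 ≤ t k₂) :
    distortionUB c (moveTransmission t k₁ k₂) = distortionUB c t +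
      exp (-(t k₁ : ℝ) * c - k₁ * log 4) * (exp (-c) - 1) +
      exp (-(t k₂ : ℝ) * c - k₂ * log 4) * (exp c - 1) := by
  rw [moveTransmission, distortionUB_update hc _ hk₂, distortionUB_update hc _ hk₁,
    update_of_ne hne.symm, Nat.cast_sub h, ← inv_four_pow_mul_exp, ← inv_four_pow_mul_exp]
  push_cast
  rw [show -((t k₁ : ℝ) + 1) * c = -(t k₁ : ℝ) * c + -c by ring,
    show -((t k₂ : ℝ) - 1) * c = -(t k₂ : ℝ) * c + c by ring, exp_add, exp_add]
  ring

end Distortion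

theorem IsEfficient.sub_mul_log_four_div_le {c : ℝ} {n : ℕ} {t : ℕ → ℕ}
    (heff : IsEfficient c n t) (hc : 0 < c) {k₁ k₂ : ℕ} (hk₁ : 1 ≤ k₁) (hk₂ : 1 ≤ k₂)
    (h : 1 ≤ t k₂) : ((k₂ : ℝ) - k₁) * (log 4 / c) ≤ (t k₁ : ℝ) - t k₂ + 1 := by
  rcases eq_or_ne k₁ k₂ with rfl | hne
  · simp
  set x := -(t k₁ : ℝ) * c - k₁ * log 4
  set y := -(t k₂ : ℝ) * c - k₂ * log 4
  have hmove : 0 ≤ exp x * (exp (-c) - 1) + exp y * (exp c - 1) := by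
    have := heff.2 _ (heff.1.moveTransmission hne hk₁ hk₂ h)
    rw [distortionUB_moveTransmission hc.le hne hk₁ hk₂ h] at this
    linarith
  have hfactor : exp y * (exp c - 1) = exp (y + c) * (1 - exp (-c)) := by
    rw [exp_add, exp_neg]
    field_simp
  have hpos : 0 < 1 - exp (-c) := sub_pos.mpr (exp_lt_one_iff.mpr (neg_lt_zero.mpr hc))
  have hexp : exp x ≤ exp (y + c) := by
    rw [hfactor] at hmove
    have hprod : 0 ≤ (exp (y + c) - exp x) * (1 - exp (-c)) := by linarith
    exact sub_nonneg.mp (nonneg_of_mul_nonneg_left hprod hpos)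
  rw [← mul_div_assoc, div_le_iff₀ hc]
  linarith [exp_le_exp.mp hexp]

theorem stmt_9_general (c : ℝ) (hc : 0 < c) (n : ℕ) (t : ℕ → ℕ)
    (heff : IsEfficient c n t) :
    ∀ k1 k2 : ℕ, 1 ≤ k1 → 1 ≤ k2 → 1 ≤ t k1 → 1 ≤ t k2 →
      ((k2 : ℝ) - k1) * (Real.log 4 / c) - 1 ≤ (t k1 : ℝ) - t k2 ∧
      (t k1 : ℝ) - t k2 ≤ ((k2 : ℝ) - k1) * (Real.log 4 / c) + 1 := by
  intro k1 k2 hk1 hk2 ht1 ht2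
  have h₁₂ := heff.sub_mul_log_four_div_le hc hk1 hk2 ht2
  have h₂₁ := heff.sub_mul_log_four_div_le hc hk2 hk1 ht1
  constructor <;> linarith

/-- Second bullet of Lemma 1: for an efficient policy and transmitted indices `k1, k2`,
`(k2 − k1)·r − 1 ≤ t_{k1} − t_{k2} ≤ (k2 − k1)·r + 1` with `r = ln 4 / c`. -/
theorem stmt_9 (c : ℝ) (hc : 0 < c) (n : ℕ) (hn : 1 ≤ n) (t : ℕ → ℕ)
    (heff : IsEfficient c n t) :
    ∀ k1 k2 : ℕ, 1 ≤ k1 → 1 ≤ k2 → 1 ≤ t k1 → 1 ≤ t k2 →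
      ((k2 : ℝ) - k1) * (Real.log 4 / c) - 1 ≤ (t k1 : ℝ) - t k2 ∧
      (t k1 : ℝ) - t k2 ≤ ((k2 : ℝ) - k1) * (Real.log 4 / c) + 1 :=
  stmt_9_general c hc n t heff
end

section
/- Fix a real constant c with 0 < c ≤ ln 4 and an integer n ≥ 1. Define, for any map t : {1,2,…} → ℕ, U_c(t) = ∑_{k=1}^∞ 4^{−k}·exp(−t_k·c). Suppose t is a transmission policy of length n (∑_{k≥1} t_k = n) that is efficient for c (U_c(t) ≤ U_c(t') for every transmission policy t' of length n). Then for every index k ≥ 1 with t_{k+1} ≥ 1, one has t_k ≥ t_{k+1}. -/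
lemma summable_aux (c : ℝ) (hc : 0 < c) (s : ℕ → ℕ) :
    Summable (fun j : ℕ => (4 : ℝ)⁻¹ ^ (j + 1) * Real.exp (-(s (j + 1) : ℝ) * c)) := by
  refine Summable.of_nonneg_of_le (f := fun j : ℕ => (4 : ℝ)⁻¹ ^ (j + 1))
    (fun j => by positivity) ?_ ?_
  · intro j
    have h1 : Real.exp (-(s (j + 1) : ℝ) * c) ≤ 1 := by
      rw [Real.exp_le_one_iff]
      have : (0 : ℝ) ≤ (s (j + 1) : ℝ) := Nat.cast_nonneg _
      nlinarith
    calc (4 : ℝ)⁻¹ ^ (j + 1) * Real.exp (-(s (j + 1) : ℝ) * c)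
        ≤ (4 : ℝ)⁻¹ ^ (j + 1) * 1 := by
          apply mul_le_mul_of_nonneg_left h1 (by positivity)
      _ = (4 : ℝ)⁻¹ ^ (j + 1) := mul_one _
  · have := (summable_geometric_of_lt_one (r := (4:ℝ)⁻¹) (by norm_num) (by norm_num)).mul_right (4:ℝ)⁻¹
    simpa [pow_succ] using this

/-- For `0 < c ≤ ln 4`, an efficient policy transmits more significant bits at least as
often as deeper ones: if `t_{k+1} ≥ 1` then `t_k ≥ t_{k+1}`. -/
theorem stmt_10 (c : ℝ) (hc : 0 < c) (hc' : c ≤ Real.log 4)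
    (n : ℕ) (hn : 1 ≤ n) (t : ℕ → ℕ) (heff : IsEfficient c n t) :
    ∀ k : ℕ, 1 ≤ k → 1 ≤ t (k + 1) → t (k + 1) ≤ t k := by
  rintro k hk hpos
  by_contra hlt
  push_neg at hlt
  obtain ⟨m, rfl⟩ : ∃ m, k = m + 1 := ⟨k - 1, by omega⟩
  have hab : t (m + 1) < t (m + 2) := hlt
  set σ := Equiv.swap m (m + 1) with hσdef
  set t' : ℕ → ℕ := fun j => t (Equiv.swap (m + 1) (m + 2) j) with ht'
  have hσ : ∀ j, Equiv.swap (m + 1) (m + 2) (j + 1) = σ j + 1 := by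
    intro j
    simp only [hσdef, Equiv.swap_apply_def]
    split_ifs <;> omega
  have ht'j : ∀ j, t' (j + 1) = t (σ j + 1) := by
    intro j; rw [ht']; simp only [hσ]
  have hpol : IsPolicy n t' := by
    unfold IsPolicy
    calc (∑' j : ℕ, (t' (j + 1) : ENNReal))
        = ∑' j : ℕ, ((fun i => (t (i + 1) : ENNReal)) (σ j)) := by
          exact tsum_congr fun j => by rw [ht'j j]
      _ = ∑' j : ℕ, (t (j + 1) : ENNReal) := σ.tsum_eq (fun i => (t (i + 1) : ENNReal))
      _ = n := heff.1
  have hle := heff.2 t' hpol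
  -- now show distortionUB c t' < distortionUB c t
  set g : ℕ → ℝ := fun j => (4 : ℝ)⁻¹ ^ (j + 1) * Real.exp (-(t (j + 1) : ℝ) * c) with hg
  set g' : ℕ → ℝ := fun j => (4 : ℝ)⁻¹ ^ (j + 1) * Real.exp (-(t' (j + 1) : ℝ) * c) with hg'
  have hs : Summable g := summable_aux c hc t
  have hs' : Summable g' := summable_aux c hc t'
  have hdiff : distortionUB c t - distortionUB c t' = ∑' j, (g j - g' j) :=
    (Summable.tsum_sub hs hs').symm
  have hsupp : ∀ j ∉ ({m, m + 1} : Finset ℕ), g j - g' j = 0 := by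
    intro j hj
    simp only [Finset.mem_insert, Finset.mem_singleton, not_or] at hj
    have hfix : σ j = j := Equiv.swap_apply_of_ne_of_ne hj.1 hj.2
    simp only [hg, hg', ht'j j, hfix, sub_self]
  have hfin : ∑' j, (g j - g' j) = ∑ j ∈ ({m, m + 1} : Finset ℕ), (g j - g' j) :=
    tsum_eq_sum hsupp
  have hm1 : t' (m + 1) = t (m + 2) := by
    rw [ht'j m]; simp [hσdef]
  have hm2 : t' (m + 2) = t (m + 1) := by
    have := ht'j (m + 1)
    rw [this]; simp [hσdef]
  have hsum2 : ∑ j ∈ ({m, m + 1} : Finset ℕ), (g j - g' j)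
      = (g m - g' m) + (g (m + 1) - g' (m + 1)) :=
    Finset.sum_pair (by omega)
  have hE : Real.exp (-(t (m + 2) : ℝ) * c) < Real.exp (-(t (m + 1) : ℝ) * c) := by
    apply Real.exp_lt_exp.mpr
    have : (t (m + 1) : ℝ) < (t (m + 2) : ℝ) := by exact_mod_cast hab
    nlinarith
  have hpow : (4 : ℝ)⁻¹ ^ (m + 2) < (4 : ℝ)⁻¹ ^ (m + 1) :=
    pow_lt_pow_right_of_lt_one₀ (by norm_num) (by norm_num) (by omega)
  have hpos2 : (0 : ℝ) < ∑ j ∈ ({m, m + 1} : Finset ℕ), (g j - g' j) := by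
    rw [hsum2]
    simp only [hg, hg', hm1, hm2]
    nlinarith
  have : distortionUB c t' < distortionUB c t := by
    have : 0 < distortionUB c t - distortionUB c t' := by
      rw [hdiff, hfin]; exact hpos2
    linarith
  linarith
end

section
/- Fix a real constant c > 0, set r = ln(4)/c, and fix an integer n ≥ 1. Define, for any map t : {1,2,…} → ℕ, U_c(t) = ∑_{k=1}^∞ 4^{−k}·exp(−t_k·c). Suppose t is a transmission policy of length n (∑_{k≥1} t_k = n) that is efficient for c (U_c(t) ≤ U_c(t') for every transmission policy t' of length n), and let q = max{ k : t_k ≥ 1 }. Then r·q·(q−1)/2 ≤ n, and consequently q ≤ 1/2 + √(2n/r + 1/4); moreover t_1 ≤ n/q + r·(q−1)/2 + 1. -/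
private lemma summable_term (c : ℝ) (hc : 0 < c) (t : ℕ → ℕ) :
    Summable (fun k : ℕ => (4 : ℝ)⁻¹ ^ (k + 1) * Real.exp (-(t (k + 1) : ℝ) * c)) := by
  apply Summable.of_nonneg_of_le (fun k => by positivity) (fun k => ?_)
    (summable_geometric_of_lt_one (by norm_num) (by norm_num : (4:ℝ)⁻¹ < 1))
  have h1 : Real.exp (-(t (k + 1) : ℝ) * c) ≤ 1 := by
    rw [Real.exp_le_one_iff]
    have : (0:ℝ) ≤ (t (k+1) : ℝ) := Nat.cast_nonneg _
    nlinarith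
  calc (4 : ℝ)⁻¹ ^ (k + 1) * Real.exp (-(t (k + 1) : ℝ) * c)
      ≤ (4:ℝ)⁻¹ ^ (k+1) * 1 := by gcongr
    _ ≤ (4:ℝ)⁻¹ ^ k := by
        rw [mul_one, pow_succ]
        nlinarith [pow_nonneg (by norm_num : (0:ℝ) ≤ 4⁻¹) k, pow_pos (by norm_num : (0:ℝ) < 4⁻¹) k]

private lemma exchange (c : ℝ) (hc : 0 < c) (n : ℕ) (t : ℕ → ℕ)
    (heff : IsEfficient c n t) (i j : ℕ) (hij : i ≠ j) (hti : 1 ≤ t (i + 1)) :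
    (t (i+1) : ℝ) - (t (j+1) : ℝ) ≤ ((j:ℝ) - (i:ℝ)) * (Real.log 4 / c) + 1 := by
  set t' : ℕ → ℕ := fun m => if m = i+1 then t (i+1) - 1 else if m = j+1 then t (j+1) + 1 else t m with ht'def
  have ht' : ∀ k, t' (k+1) = if k = i then t (i+1) - 1 else if k = j then t (j+1) + 1 else t (k+1) := by
    intro k; simp only [ht'def, add_left_inj]
  -- t' is a policy
  have hpol : IsPolicy n t' := by
    unfold IsPolicy
    have e1 : ∀ (s : ℕ → ℕ), (∑' k : ℕ, (s (k+1) : ENNReal))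
        = (s (i+1) : ENNReal) + (s (j+1) : ENNReal)
          + ∑' k : ℕ, (if k = j then 0 else if k = i then 0 else (s (k+1) : ENNReal)) := by
      intro s
      have h1 := ENNReal.tsum_eq_add_tsum_ite (f := fun k => (s (k+1) : ENNReal)) i
      have h2 := ENNReal.tsum_eq_add_tsum_ite (f := fun k => if k = i then (0:ENNReal) else (s (k+1) : ENNReal)) j
      rw [h1, add_assoc]
      congr 1
      convert h2 using 2 <;>
        first
          | (funext k; by_cases hk : k = i <;> simp [hk])
          | simp [hij.symm]
          | (apply tsum_congr; intro k;
             by_cases hk1 : k = j <;> by_cases hk2 : k = i <;> simp [hk1, hk2])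
    rw [e1 t', ← heff.1, e1 t]
    have : ∀ k : ℕ, (if k = j then 0 else if k = i then 0 else (t' (k+1) : ENNReal))
        = (if k = j then 0 else if k = i then 0 else (t (k+1) : ENNReal)) := by
      intro k
      by_cases h1 : k = j
      · simp [h1]
      · by_cases h2 : k = i
        · simp [h1, h2]
        · simp [h1, h2, ht' k]
    rw [tsum_congr this]
    congr 1
    rw [ht' i, ht' j]
    simp [hij, hij.symm]
    have hx : (1:ENNReal) ≤ (t (i+1) : ENNReal) := by exact_mod_cast hti
    calc ((t (i+1):ENNReal) - 1) + ((t (j+1):ENNReal) + 1)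
        = (((t (i+1):ENNReal) - 1) + 1) + (t (j+1):ENNReal) := by ring
      _ = (t (i+1):ENNReal) + (t (j+1):ENNReal) := by rw [tsub_add_cancel_of_le hx]
  have hle := heff.2 t' hpol
  set F : ℕ → ℝ := fun k => (4 : ℝ)⁻¹ ^ (k + 1) * Real.exp (-(t (k + 1) : ℝ) * c) with hF
  set F' : ℕ → ℝ := fun k => (4 : ℝ)⁻¹ ^ (k + 1) * Real.exp (-(t' (k + 1) : ℝ) * c) with hF'
  have hsF : Summable F := summable_term c hc t
  have hsF' : Summable F' := summable_term c hc t'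
  have hdiff : ∀ k ∉ ({i, j} : Finset ℕ), F' k - F k = 0 := by
    intro k hk
    simp only [Finset.mem_insert, Finset.mem_singleton, not_or] at hk
    simp [hF, hF', ht' k, hk.1, hk.2]
  have hsum_diff : ∑' k, (F' k - F k) = (F' i - F i) + (F' j - F j) := by
    rw [tsum_eq_sum hdiff, Finset.sum_pair hij]
  have h0 : 0 ≤ (F' i - F i) + (F' j - F j) := by
    rw [← hsum_diff, Summable.tsum_sub hsF' hsF]
    have : distortionUB c t = ∑' k, F k := rfl
    have h2 : distortionUB c t' = ∑' k, F' k := rfl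
    simp only [this, h2] at hle
    linarith
  -- rewrite F' i and F' j
  have hFi : F' i = (4 : ℝ)⁻¹ ^ (i + 1) * Real.exp (-((t (i+1) : ℝ) - 1) * c) := by
    simp only [hF', ht' i, if_pos rfl]
    congr 2
    push_cast [Nat.cast_sub hti]
    ring
  have hFj : F' j = (4 : ℝ)⁻¹ ^ (j + 1) * Real.exp (-((t (j+1) : ℝ) + 1) * c) := by
    simp only [hF', ht' j, if_neg hij.symm, if_pos rfl]
    congr 2
    push_cast
    ring
  set A := (4 : ℝ)⁻¹ ^ (i + 1) with hA
  set B := (4 : ℝ)⁻¹ ^ (j + 1) with hB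
  set a := (t (i+1) : ℝ)
  set b := (t (j+1) : ℝ)
  have hEi : Real.exp (-(a - 1) * c) = Real.exp (-a * c) * Real.exp c := by
    rw [← Real.exp_add]; ring_nf
  have hEj : Real.exp (-(b + 1) * c) = Real.exp (-b * c) * Real.exp (-c) := by
    rw [← Real.exp_add]; ring_nf
  have hEE : Real.exp (-c) * Real.exp c = 1 := by rw [← Real.exp_add]; simp
  have hE1 : 1 < Real.exp c := by
    rw [← Real.exp_zero]; exact Real.exp_lt_exp.mpr hc
  have hApos : 0 < A := by positivity
  have hBpos : 0 < B := by positivity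
  have hXpos : 0 < Real.exp (-a * c) := Real.exp_pos _
  have hYpos : 0 < Real.exp (-b * c) := Real.exp_pos _
  have hkey : B * Real.exp (-(b + 1) * c) ≤ A * Real.exp (-a * c) := by
    have h0' : 0 ≤ (A * (Real.exp (-a*c) * Real.exp c) - A * Real.exp (-a*c))
        + (B * (Real.exp (-b*c) * Real.exp (-c)) - B * Real.exp (-b*c)) := by
      have : F i = A * Real.exp (-a * c) := rfl
      have hj' : F j = B * Real.exp (-b * c) := rfl
      rw [hFi, hFj, hEi, hEj] at h0
      linarith [h0]
    rw [hEj]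
    nlinarith [h0', hEE, mul_pos hBpos hYpos, mul_pos hApos hXpos]
  -- take logs
  have hL := Real.log_le_log (by positivity) hkey
  rw [Real.log_mul (by positivity) (Real.exp_ne_zero _), Real.log_mul (by positivity) (Real.exp_ne_zero _),
    Real.log_exp, Real.log_exp, hA, hB, Real.log_pow, Real.log_pow, Real.log_inv] at hL
  push_cast at hL
  have hlog4 : 0 < Real.log 4 := Real.log_pos (by norm_num)
  have h5 : (a - b - 1) * c ≤ ((j:ℝ) - i) * Real.log 4 := by nlinarith [hL]
  have h6 : a - b - 1 ≤ ((j:ℝ) - i) * Real.log 4 / c := (le_div_iff₀ hc).mpr h5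
  rw [mul_div_assoc] at h6
  linarith

private lemma gauss_sum_real (q : ℕ) : ∑ k ∈ Finset.range q, (k : ℝ) = q * (q - 1) / 2 := by
  induction q with
  | zero => simp
  | succ m ih =>
    rw [Finset.sum_range_succ, ih]
    push_cast
    ring


/-- Corollary 3 of the appendix: for an efficient policy with maximal transmitted index
`q` and `r = ln 4 / c`, one has `r q (q−1)/2 ≤ n`, hence `q ≤ 1/2 + √(2n/r + 1/4)`, and
moreover `t_1 ≤ n/q + r (q−1)/2 + 1`. -/
theorem stmt_11 (c : ℝ) (hc : 0 < c) (n : ℕ) (hn : 1 ≤ n) (t : ℕ → ℕ)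
    (heff : IsEfficient c n t) (q : ℕ)
    (hq : 1 ≤ t q ∧ ∀ k : ℕ, 1 ≤ t k → k ≤ q) :
    (Real.log 4 / c) * q * ((q : ℝ) - 1) / 2 ≤ n ∧
    (q : ℝ) ≤ 1 / 2 + Real.sqrt (2 * n / (Real.log 4 / c) + 1 / 4) ∧
    (t 1 : ℝ) ≤ n / q + (Real.log 4 / c) * ((q : ℝ) - 1) / 2 + 1 := by
  set r := Real.log 4 / c with hr
  have hlog4 : 0 < Real.log 4 := Real.log_pos (by norm_num)
  have hrpos : 0 < r := div_pos hlog4 hc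
  -- the support of (k ↦ t (k+1)) is inside range q
  have hsupp : ∀ k : ℕ, k ∉ Finset.range q → (t (k+1) : ENNReal) = 0 := by
    intro k hk
    rw [Finset.mem_range, not_lt] at hk
    have : t (k+1) = 0 := by
      by_contra h
      have := hq.2 (k+1) (by omega)
      omega
    simp [this]
  have hsum : ∑ k ∈ Finset.range q, t (k+1) = n := by
    have := heff.1
    unfold IsPolicy at this
    rw [tsum_eq_sum hsupp] at this
    exact_mod_cast this
  have hq1 : 1 ≤ q := by
    by_contra h
    have : q = 0 := by omega
    rw [this] at hsum
    simp at hsum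
    omega
  have hqR : (1:ℝ) ≤ (q:ℝ) := by exact_mod_cast hq1
  -- part (a): lower bound on each t (k+1)
  have ha : ∀ k ∈ Finset.range q, ((q:ℝ) - (k+1)) * r ≤ (t (k+1) : ℝ) := by
    intro k hk
    rw [Finset.mem_range] at hk
    by_cases hkq : k + 1 = q
    · have : ((q:ℝ) - (k+1)) = 0 := by rw [← hkq]; push_cast; ring
      rw [this, zero_mul]
      positivity
    · have hne : (q - 1) ≠ k := by omega
      have hexc := exchange c hc n t heff (q-1) k hne
        (by rw [Nat.sub_add_cancel hq1]; exact hq.1)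
      rw [Nat.sub_add_cancel hq1] at hexc
      have hcast : ((q - 1 : ℕ) : ℝ) = (q:ℝ) - 1 := by
        rw [Nat.cast_sub hq1]; simp
      rw [hcast] at hexc
      have htq : (1:ℝ) ≤ (t q : ℝ) := by exact_mod_cast hq.1
      nlinarith [hexc, htq]
  -- first inequality
  have hsum_lb : ∑ k ∈ Finset.range q, (((q:ℝ) - ((k:ℝ)+1)) * r) ≤ (n:ℝ) := by
    have h1 : ∑ k ∈ Finset.range q, (((q:ℝ) - ((k:ℝ)+1)) * r) ≤ ∑ k ∈ Finset.range q, (t (k+1) : ℝ) :=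
      Finset.sum_le_sum ha
    have h2 : ∑ k ∈ Finset.range q, (t (k+1) : ℝ) = (n:ℝ) := by
      exact_mod_cast congrArg (Nat.cast : ℕ → ℝ) hsum
    linarith
  have hsum_eval : ∑ k ∈ Finset.range q, (((q:ℝ) - ((k:ℝ)+1)) * r) = r * q * ((q:ℝ)-1) / 2 := by
    rw [← Finset.sum_mul]
    have : ∑ k ∈ Finset.range q, ((q:ℝ) - ((k:ℝ)+1)) = ∑ k ∈ Finset.range q, (((q:ℝ)-1) - (k:ℝ)) := by
      apply Finset.sum_congr rfl; intro k _; ring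
    rw [this, Finset.sum_sub_distrib, Finset.sum_const, Finset.card_range, nsmul_eq_mul,
      gauss_sum_real]
    ring
  have hineq1 : r * q * ((q:ℝ) - 1) / 2 ≤ (n:ℝ) := by
    rw [← hsum_eval]; exact hsum_lb
  refine ⟨hineq1, ?_, ?_⟩
  -- second inequality
  · have hsq : ((q:ℝ) - 1/2)^2 ≤ 2 * n / r + 1/4 := by
      have h1 : (q:ℝ) * ((q:ℝ) - 1) ≤ 2 * n / r := by
        rw [le_div_iff₀ hrpos]
        nlinarith [hineq1]
      nlinarith [h1]
    have h2 : (q:ℝ) - 1/2 ≤ Real.sqrt (2 * n / r + 1/4) := by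
      have h3 : (q:ℝ) - 1/2 = Real.sqrt (((q:ℝ) - 1/2)^2) := by
        rw [Real.sqrt_sq (by linarith)]
      rw [h3]
      exact Real.sqrt_le_sqrt hsq
    linarith
  -- third inequality
  · have hb : ∀ k ∈ Finset.range q, (t 1 : ℝ) ≤ (t (k+1) : ℝ) + (k:ℝ) * r + 1 := by
      intro k hk
      by_cases hk0 : k = 0
      · subst hk0; simp
      · by_cases ht1 : t 1 = 0
        · rw [ht1]
          push_cast
          positivity
        · have hexc := exchange c hc n t heff 0 k (by omega) (by simp only [Nat.zero_add]; omega)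
          push_cast at hexc
          linarith [hexc]
    have hsum_ub : (q:ℝ) * (t 1 : ℝ) ≤ (n:ℝ) + r * q * ((q:ℝ)-1) / 2 + q := by
      have h1 : ∑ k ∈ Finset.range q, (t 1 : ℝ) ≤ ∑ k ∈ Finset.range q, ((t (k+1) : ℝ) + (k:ℝ) * r + 1) :=
        Finset.sum_le_sum hb
      rw [Finset.sum_const, Finset.card_range, nsmul_eq_mul] at h1
      have h2 : ∑ k ∈ Finset.range q, ((t (k+1) : ℝ) + (k:ℝ) * r + 1)
          = (n:ℝ) + (q * ((q:ℝ)-1)/2) * r + q := by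
        rw [Finset.sum_add_distrib, Finset.sum_add_distrib, ← Finset.sum_mul, gauss_sum_real,
          Finset.sum_const, Finset.card_range, nsmul_eq_mul, mul_one]
        have h3 : ∑ k ∈ Finset.range q, (t (k+1) : ℝ) = (n:ℝ) := by
          exact_mod_cast congrArg (Nat.cast : ℕ → ℝ) hsum
        rw [h3]
      rw [h2] at h1
      linarith
    have hq0 : (0:ℝ) < (q:ℝ) := by linarith
    rw [show (n:ℝ) / q + r * ((q:ℝ)-1) / 2 + 1 = ((n:ℝ) + r * q * ((q:ℝ)-1) / 2 + q) / q by
      field_simp]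
    rw [le_div_iff₀ hq0]
    linarith [hsum_ub]
end

section
/- Fix real constants c and b with 0 < c ≤ ln 4 and b > 0, set r = ⌊ln(4)/c⌋, A_2 = √(2r)·c and A_1 = √(2·c·ln 4). For each n ≥ 1 let t^{(n)} be the Aurelian pattern (q_n = ⌊√(2n/r + 1/4) − 1/2⌋, t^{(n)}_k = (q_n − k + 1)·r for 1 ≤ k ≤ q_n and 0 otherwise) and let s^{(n)} be any transmission policy of length n (∑_{k≥1} s^{(n)}_k = n) that is efficient for c (U_c(s^{(n)}) ≤ U_c(t') for every transmission policy t' of length n). With U_c(t) = ∑_{k=1}^∞ 4^{−k}·exp(−t_k·c) and L_b(t) = (1/4)·∑_{k=1}^∞ 4^{−k}·exp(−t_k·b), one has liminf_{n→∞} ln( U_c(t^{(n)}) ) / ln( L_b(s^{(n)}) ) ≥ A_2 / A_1 > 0. -/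
/-- Lower bound on the end-to-end distortion of a transmission pattern `t : {1,2,…} → ℕ`:
`L_b(t) = (1/4) ∑_{k≥1} 4^{−k} exp(−t_k b)`. -/
noncomputable def distortionLB (b : ℝ) (t : ℕ → ℕ) : ℝ :=
  (1 / 4) * ∑' k : ℕ, (4 : ℝ)⁻¹ ^ (k + 1) * Real.exp (-(t (k + 1) : ℝ) * b)

/-- The parameter `r = ⌊ln 4 / c⌋` of the Aurelian policy. -/
noncomputable def aurelianR (c : ℝ) : ℕ := ⌊Real.log 4 / c⌋₊

/-- The maximal transmitted index `q_n = ⌊√(2n/r + 1/4) − 1/2⌋` of the Aurelian policy. -/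
noncomputable def aurelianQ (c : ℝ) (n : ℕ) : ℕ :=
  ⌊Real.sqrt (2 * n / (aurelianR c : ℝ) + 1 / 4) - 1 / 2⌋₊

/-- The Aurelian pattern: bit `k` is transmitted `(q_n − k + 1)·r` times for
`1 ≤ k ≤ q_n`, and never for `k > q_n`. -/
noncomputable def aurelian (c : ℝ) (n : ℕ) : ℕ → ℕ := fun k =>
  if 1 ≤ k ∧ k ≤ aurelianQ c n then (aurelianQ c n - k + 1) * aurelianR c else 0

/-!
Exchanging a single transmission between two bits of an efficient policy `s` of length `n`
shows `k log 4 + s_k c ≤ j log 4 + s_j c + c` whenever bit `k` is transmitted. Summed over the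
bits below the last transmitted one, `M`, this confines `M` between `√(c n / (2 log 4))` and
`√(2 n c / log 4) + 1` and forces `s_j c ≥ (M - j) log 4` for `j ≤ M`. Hence
`-log L_b(s) ≤ A₁ √n + 3 log 4` (some bit `m ≤ √(2 n c / log 4) + 2` is silent) and
`-log L_b(s) ≥ const · √n`. On the Aurelian pattern every bit costs at least `r c q_n`, and
`r c q_n ≥ A₂ √n - O(1)`, so `-log U_c(t) ≥ A₂ √n - O(log n)`, while the first bit alone gives
`-log U_c(t) = O(√n)`. The ratio of the logarithms is therefore eventually bounded and bounded
below by a quantity tending to `A₂ / A₁`.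
-/

open Real Filter Topology Finset Asymptotics

/-- The bounds `N ≤ K y` and `δ y ≤ D` only keep `N / D` bounded above: without them the
`liminf` in `ℝ` could be the junk value of `sSup ∅`. -/
theorem le_liminf_div_of_isLittleO {ι : Type*} {l : Filter ι} [l.NeBot] {N D y e : ι → ℝ}
    {a₁ a₂ C K δ : ℝ} (ha₁ : 0 < a₁) (hδ : 0 < δ) (hy : Tendsto y l atTop) (he : e =o[l] y)
    (hN_ge : ∀ᶠ i in l, a₂ * y i - e i ≤ N i) (hN_nonneg : ∀ᶠ i in l, 0 ≤ N i)
    (hN_le : ∀ᶠ i in l, N i ≤ K * y i) (hD_ge : ∀ᶠ i in l, δ * y i ≤ D i)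
    (hD_le : ∀ᶠ i in l, D i ≤ a₁ * y i + C) :
    a₂ / a₁ ≤ liminf (fun i => N i / D i) l := by
  have hy_pos : ∀ᶠ i in l, 0 < y i := hy.eventually_gt_atTop 0
  have hlower : Tendsto (fun i => (a₂ * y i - e i) / (a₁ * y i + C)) l (𝓝 (a₂ / a₁)) := by
    have hlim : Tendsto (fun i => (a₂ - e i / y i) / (a₁ + C / y i)) l
        (𝓝 ((a₂ - 0) / (a₁ + 0))) :=
      (tendsto_const_nhds.sub he.tendsto_div_nhds_zero).div
        (tendsto_const_nhds.add (hy.const_div_atTop C)) (by simpa using ha₁.ne')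
    rw [sub_zero, add_zero] at hlim
    refine hlim.congr' ?_
    filter_upwards [hy_pos] with i hi
    field_simp
  have hbounded : ∀ᶠ i in l, N i / D i ≤ K / δ := by
    filter_upwards [hy_pos, hN_nonneg, hN_le, hD_ge] with i hi hN₀ hN hD
    calc N i / D i ≤ K * y i / (δ * y i) :=
          div_le_div₀ (hN₀.trans hN) hN (by positivity) hD
      _ = K / δ := mul_div_mul_right _ _ hi.ne'
  rw [← hlower.liminf_eq]
  refine liminf_le_liminf ?_ hlower.isBoundedUnder_ge
    (isCoboundedUnder_ge_of_eventually_le l hbounded)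
  filter_upwards [hy_pos, hN_ge, hN_nonneg, hD_ge, hD_le] with i hi hN hN₀ hD₁ hD₂
  exact div_le_div₀ hN₀ hN ((mul_pos hδ hi).trans_le hD₁) hD₂

/-- Bit `k` contributes `4⁻ᵏ · exp (-t k · d) = exp (-bitCost d t k)` to `U_d t`. -/
noncomputable def bitCost (d : ℝ) (t : ℕ → ℕ) (k : ℕ) : ℝ := k * log 4 + t k * d

theorem inv_pow_eq_exp_neg {x : ℝ} (hx : 0 < x) (k : ℕ) : x⁻¹ ^ k = exp (-(k * log x)) := by
  rw [← mul_neg, exp_nat_mul, exp_neg, exp_log hx]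

theorem distortionUB_eq_tsum (c : ℝ) (t : ℕ → ℕ) :
    distortionUB c t = ∑' k : ℕ, exp (-bitCost c t (k + 1)) := by
  refine tsum_congr fun k => ?_
  rw [inv_pow_eq_exp_neg four_pos, ← exp_add, bitCost]
  ring_nf

theorem distortionLB_eq (b : ℝ) (t : ℕ → ℕ) : distortionLB b t = 1 / 4 * distortionUB b t := rfl

theorem distortionLB_eq_tsum (b : ℝ) (t : ℕ → ℕ) :
    distortionLB b t = 1 / 4 * ∑' k : ℕ, exp (-bitCost b t (k + 1)) := by
  rw [distortionLB_eq, distortionUB_eq_tsum]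

section bitCost

variable {d : ℝ} {t : ℕ → ℕ}

theorem mul_log_four_le_bitCost (hd : 0 ≤ d) (k : ℕ) : k * log 4 ≤ bitCost d t k :=
  le_add_of_nonneg_right (by positivity)

theorem exp_neg_bitCost_le (hd : 0 ≤ d) (k : ℕ) : exp (-bitCost d t k) ≤ (4 : ℝ)⁻¹ ^ k := by
  rw [inv_pow_eq_exp_neg four_pos, exp_le_exp, neg_le_neg_iff]
  exact mul_log_four_le_bitCost hd k

theorem tsum_inv_four_pow_succ : ∑' k : ℕ, (4 : ℝ)⁻¹ ^ (k + 1) = 1 / 3 := by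
  simp_rw [pow_succ']
  rw [tsum_mul_left, tsum_geometric_of_lt_one (by norm_num) (by norm_num)]
  norm_num

theorem summable_inv_four_pow_succ : Summable fun k : ℕ => (4 : ℝ)⁻¹ ^ (k + 1) :=
  (summable_geometric_of_lt_one (by norm_num) (by norm_num)).comp_injective (add_left_injective 1)

theorem summable_exp_neg_bitCost (hd : 0 ≤ d) :
    Summable fun k : ℕ => exp (-bitCost d t (k + 1)) :=
  summable_inv_four_pow_succ.of_nonneg_of_le (fun _ => (exp_pos _).le)
    fun k => exp_neg_bitCost_le hd (k + 1)

theorem tsum_exp_neg_bitCost_le_third (hd : 0 ≤ d) :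
    ∑' k : ℕ, exp (-bitCost d t (k + 1)) ≤ 1 / 3 :=
  tsum_inv_four_pow_succ ▸ (summable_exp_neg_bitCost hd).tsum_le_tsum
    (fun k => exp_neg_bitCost_le hd (k + 1)) summable_inv_four_pow_succ

theorem exp_neg_bitCost_le_tsum (hd : 0 ≤ d) {k : ℕ} (hk : k ≠ 0) :
    exp (-bitCost d t k) ≤ ∑' k : ℕ, exp (-bitCost d t (k + 1)) := by
  obtain ⟨k, rfl⟩ := Nat.exists_eq_add_one_of_ne_zero hk
  exact (summable_exp_neg_bitCost hd).le_tsum k fun _ _ => (exp_pos _).le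

theorem tsum_exp_neg_bitCost_le_of_le (hd : 0 ≤ d) {M : ℕ} {a : ℝ} (ha : a ≤ M * log 4)
    (h : ∀ k, 1 ≤ k → k ≤ M → a ≤ bitCost d t k) :
    ∑' k : ℕ, exp (-bitCost d t (k + 1)) ≤ (M + 1) * exp (-a) := by
  rw [← (summable_exp_neg_bitCost hd).sum_add_tsum_nat_add M]
  have hhead : ∑ k ∈ range M, exp (-bitCost d t (k + 1)) ≤ M * exp (-a) := by
    simpa using Finset.sum_le_card_nsmul (range M) _ (exp (-a)) fun k hk =>
      exp_le_exp.2 (neg_le_neg (h (k + 1) (by omega) (by have := mem_range.1 hk; omega)))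
  have htail : ∑' k : ℕ, exp (-bitCost d t (k + M + 1)) ≤ exp (-a) := by
    have hle (k : ℕ) : exp (-bitCost d t (k + M + 1)) ≤ exp (-a) * (4 : ℝ)⁻¹ ^ (k + 1) := by
      rw [inv_pow_eq_exp_neg four_pos, ← exp_add, exp_le_exp]
      have := mul_log_four_le_bitCost (t := t) hd (k + M + 1)
      push_cast at this ⊢
      linarith
    calc ∑' k : ℕ, exp (-bitCost d t (k + M + 1))
        ≤ ∑' k : ℕ, exp (-a) * (4 : ℝ)⁻¹ ^ (k + 1) :=
          ((summable_exp_neg_bitCost hd).comp_injective (add_left_injective M)).tsum_le_tsum hle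
            (summable_inv_four_pow_succ.mul_left _)
      _ = exp (-a) / 3 := by rw [tsum_mul_left, tsum_inv_four_pow_succ]; ring
      _ ≤ exp (-a) := by linarith [exp_pos (-a)]
  linarith

theorem tsum_exp_neg_bitCost_le_exp_neg {a : ℝ} (h : ∀ k, k ≠ 0 → a + k * log 2 ≤ bitCost d t k) :
    ∑' k : ℕ, exp (-bitCost d t (k + 1)) ≤ exp (-a) := by
  have hle (k : ℕ) : exp (-bitCost d t (k + 1)) ≤ exp (-a) * (2 : ℝ)⁻¹ ^ (k + 1) := by
    rw [inv_pow_eq_exp_neg two_pos, ← exp_add, exp_le_exp]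
    linarith [h (k + 1) k.add_one_ne_zero]
  have hgeom : HasSum (fun k : ℕ => exp (-a) * (2 : ℝ)⁻¹ ^ (k + 1)) (exp (-a)) := by
    simpa [pow_succ', ← mul_assoc] using (hasSum_geometric_two.mul_left (exp (-a) * 2⁻¹))
  calc ∑' k : ℕ, exp (-bitCost d t (k + 1)) ≤ ∑' k : ℕ, exp (-a) * (2 : ℝ)⁻¹ ^ (k + 1) :=
        (hgeom.summable.of_nonneg_of_le (fun _ => (exp_pos _).le) hle).tsum_le_tsum hle
          hgeom.summable
    _ = exp (-a) := hgeom.tsum_eq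

end bitCost

theorem distortionUB_pos {d : ℝ} (hd : 0 ≤ d) (t : ℕ → ℕ) : 0 < distortionUB d t :=
  distortionUB_eq_tsum d t ▸ (exp_pos _).trans_le (exp_neg_bitCost_le_tsum hd one_ne_zero)

theorem log_distortionUB_nonpos {d : ℝ} (hd : 0 ≤ d) (t : ℕ → ℕ) : log (distortionUB d t) ≤ 0 :=
  log_nonpos (distortionUB_pos hd t).le
    (distortionUB_eq_tsum d t ▸ (tsum_exp_neg_bitCost_le_third hd).trans (by norm_num))

theorem distortionLB_pos {b : ℝ} (hb : 0 ≤ b) (t : ℕ → ℕ) : 0 < distortionLB b t := by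
  rw [distortionLB_eq]
  have := distortionUB_pos hb t
  positivity

namespace IsPolicy

variable {n : ℕ} {t : ℕ → ℕ}

theorem sum_range_le (h : IsPolicy n t) (M : ℕ) : ∑ k ∈ range M, t (k + 1) ≤ n := by
  have : ((∑ k ∈ range M, t (k + 1) : ℕ) : ENNReal) ≤ n := by
    rw [← h, Nat.cast_sum]
    exact ENNReal.sum_le_tsum _
  exact_mod_cast this

theorem sum_range_eq (h : IsPolicy n t) {M : ℕ} (hM : ∀ j, M < j → t j = 0) :
    ∑ k ∈ range M, t (k + 1) = n := by
  have : ((∑ k ∈ range M, t (k + 1) : ℕ) : ENNReal) = n := by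
    rw [← h, Nat.cast_sum, tsum_eq_sum]
    intro k hk
    simp [hM (k + 1) (by simpa using hk)]
  exact_mod_cast this

theorem exists_last (h : IsPolicy n t) (hn : n ≠ 0) {N : ℕ} (hN : ∀ j, N < j → t j = 0) :
    ∃ M, M ≠ 0 ∧ t M ≠ 0 ∧ ∀ j, M < j → t j = 0 := by
  classical
  obtain ⟨j₀, hj₀, htj₀⟩ : ∃ j, j ≠ 0 ∧ t j ≠ 0 := by
    by_contra! hzero
    exact hn (h.sum_range_eq fun j hj => hzero j hj.ne').symm
  have hj₀N : j₀ ≤ N := by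
    by_contra! hlt
    exact htj₀ (hN j₀ hlt)
  have hlast := Nat.findGreatest_spec (P := fun j => j ≠ 0 ∧ t j ≠ 0) hj₀N ⟨hj₀, htj₀⟩
  refine ⟨_, hlast.1, hlast.2, fun j hj => ?_⟩
  rcases le_or_gt j N with hjN | hjN
  · by_contra htj
    exact Nat.findGreatest_is_greatest hj hjN ⟨by omega, htj⟩
  · exact hN j hjN

theorem transfer (h : IsPolicy n t) {i j : ℕ} (hi : i ≠ 0) (hj : j ≠ 0) (hij : i ≠ j)
    (htj : t j ≠ 0) : IsPolicy n (Function.update (Function.update t i (t i + 1)) j (t j - 1)) := by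
  obtain ⟨i, rfl⟩ := Nat.exists_eq_add_one_of_ne_zero hi
  obtain ⟨j, rfl⟩ := Nat.exists_eq_add_one_of_ne_zero hj
  set t' := Function.update (Function.update t (i + 1) (t (i + 1) + 1)) (j + 1) (t (j + 1) - 1)
  have hij' : i ≠ j := by omega
  have hbalance (k : ℕ) :
      t' (k + 1) + (if k = j then 1 else 0) = t (k + 1) + (if k = i then 1 else 0) := by
    by_cases hki : k = i <;> by_cases hkj : k = j <;>
      simp [t', hki, hkj, hij', hij'.symm, Nat.sub_add_cancel (Nat.one_le_iff_ne_zero.2 htj)]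
  have hsum := congrArg (fun f : ℕ → ENNReal => ∑' k, f k)
    (funext fun k => congrArg (Nat.cast : ℕ → ENNReal) (hbalance k))
  simp only [Nat.cast_add, Nat.cast_ite, Nat.cast_one, Nat.cast_zero, ENNReal.tsum_add,
    tsum_ite_eq] at hsum
  rw [show ∑' k, (t (k + 1) : ENNReal) = n from h] at hsum
  exact (ENNReal.add_left_inj ENNReal.one_ne_top).1 hsum

end IsPolicy

theorem sum_range_natCast (M : ℕ) : ∑ k ∈ range M, (k : ℝ) = M * (M - 1) / 2 := by
  induction M with
  | zero => simp
  | succ M ih => rw [sum_range_succ, ih]; push_cast; ring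

theorem le_mul_exp_of_gain_nonneg {x y c : ℝ} (hc : 0 < c)
    (h : 0 ≤ x * (exp (-c) - 1) + y * (exp c - 1)) : x ≤ y * exp c := by
  have hexp : exp (-c) * exp c = 1 := by rw [← exp_add, neg_add_cancel, exp_zero]
  have hmul : (exp c - 1) * (y * exp c - x) = (x * (exp (-c) - 1) + y * (exp c - 1)) * exp c := by
    linear_combination (-x) * hexp
  have hpos : 0 < exp c - 1 := by linarith [add_one_lt_exp hc.ne']
  exact sub_nonneg.1 (nonneg_of_mul_nonneg_right (hmul ▸ mul_nonneg h (exp_pos c).le) hpos)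

namespace IsEfficient

variable {b c : ℝ} {n : ℕ} {t : ℕ → ℕ}

/-- Exchange argument: moving one transmission from bit `j` to bit `i` cannot lower `U_c`. -/
theorem bitCost_le_add (hc : 0 < c) (ht : IsEfficient c n t) {i j : ℕ} (hi : i ≠ 0) (hj : j ≠ 0)
    (hij : i ≠ j) (htj : t j ≠ 0) : bitCost c t j ≤ bitCost c t i + c := by
  have hU := ht.2 _ (ht.1.transfer hi hj hij htj)
  obtain ⟨i, rfl⟩ := Nat.exists_eq_add_one_of_ne_zero hi
  obtain ⟨j, rfl⟩ := Nat.exists_eq_add_one_of_ne_zero hj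
  set t' := Function.update (Function.update t (i + 1) (t (i + 1) + 1)) (j + 1) (t (j + 1) - 1)
  have hij' : i ≠ j := by omega
  set f : ℕ → ℝ := fun k => exp (-bitCost c t (k + 1))
  set f' : ℕ → ℝ := fun k => exp (-bitCost c t' (k + 1))
  have hfi : f' i = f i * exp (-c) := by
    simp only [f', f, t', bitCost, ← exp_add, Function.update_apply,
      if_neg (by omega : i + 1 ≠ j + 1)]
    push_cast
    ring_nf
  have hfj : f' j = f j * exp c := by
    simp only [f', f, t', bitCost, ← exp_add, Function.update_apply]
    push_cast [Nat.one_le_iff_ne_zero.2 htj]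
    ring_nf
  have hf (k : ℕ) (hk : k ∉ ({i, j} : Finset ℕ)) : f' k - f k = 0 := by
    simp only [Finset.mem_insert, Finset.mem_singleton, not_or] at hk
    simp [f', f, t', bitCost, Function.update_apply, hk.1, hk.2]
  have hgain : 0 ≤ f i * (exp (-c) - 1) + f j * (exp c - 1) := by
    rw [distortionUB_eq_tsum, distortionUB_eq_tsum, ← sub_nonneg,
      ← (summable_exp_neg_bitCost hc.le).tsum_sub (summable_exp_neg_bitCost hc.le),
      tsum_eq_sum hf, sum_pair hij'] at hU
    rw [hfi, hfj] at hU
    linarith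
  have hfij := le_mul_exp_of_gain_nonneg hc hgain
  simp only [f, ← exp_add, exp_le_exp] at hfij
  linarith

theorem sub_mul_log_four_le (hc : 0 < c) (ht : IsEfficient c n t) {M j : ℕ} (htM : t M ≠ 0)
    (hj : j ≠ 0) (hjM : j ≤ M) : ((M : ℝ) - j) * log 4 ≤ t j * c := by
  rcases eq_or_ne j M with rfl | hne
  · simp only [sub_self, zero_mul]
    positivity
  have hexchange := ht.bitCost_le_add hc hj (by omega) hne htM
  have htM' : (1 : ℝ) ≤ t M := by exact_mod_cast Nat.one_le_iff_ne_zero.2 htM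
  simp only [bitCost] at hexchange
  nlinarith

theorem mul_le_of_eq_zero (hc : 0 < c) (ht : IsEfficient c n t) {i j : ℕ} (hi : i ≠ 0)
    (hj : j ≠ 0) (hti : t i = 0) (htj : t j ≠ 0) : t j * c ≤ c + ((i : ℝ) - j) * log 4 := by
  have hexchange := ht.bitCost_le_add hc hi hj (by rintro rfl; exact htj hti) htj
  simp only [bitCost, hti, Nat.cast_zero, zero_mul, add_zero] at hexchange
  linarith

/-- Every bit before a transmitted bit `M` is itself transmitted often; summing gives `M ≲ √n`. -/
theorem mul_sub_one_mul_log_four_le (hc : 0 < c) (ht : IsEfficient c n t) {M : ℕ}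
    (htM : t M ≠ 0) : M * ((M : ℝ) - 1) * log 4 ≤ 2 * n * c := by
  have hbits : ∑ k ∈ range M, ((M : ℝ) - (k + 1)) * log 4 ≤ ∑ k ∈ range M, (t (k + 1) : ℝ) * c :=
    sum_le_sum fun k hk => by
      simpa using ht.sub_mul_log_four_le hc htM k.add_one_ne_zero (by have := mem_range.1 hk; omega)
  have hlen : (∑ k ∈ range M, t (k + 1) : ℝ) ≤ n := by exact_mod_cast ht.1.sum_range_le M
  rw [← sum_mul, ← sum_mul] at hbits
  simp only [sum_sub_distrib, sum_add_distrib, sum_range_natCast, sum_const, card_range,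
    nsmul_eq_mul, mul_one] at hbits
  nlinarith

theorem eq_zero_of_floor_add_one_lt (hc : 0 < c) (ht : IsEfficient c n t) {j : ℕ}
    (hj : ⌊√(2 * n * c / log 4)⌋₊ + 1 < j) : t j = 0 := by
  by_contra htj
  set x := √(2 * n * c / log 4)
  have hlog4 : 0 < log 4 := log_pos (by norm_num)
  have hsq : x ^ 2 = 2 * n * c / log 4 := sq_sqrt (by positivity)
  have hxj : x < j - 1 := by
    have : (⌊x⌋₊ : ℝ) + 1 + 1 ≤ j := by exact_mod_cast hj
    linarith [Nat.lt_floor_add_one x]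
  have hjsq : 2 * n * c / log 4 < j * ((j : ℝ) - 1) := by
    nlinarith [sqrt_nonneg (2 * n * c / log 4)]
  rw [div_lt_iff₀ hlog4] at hjsq
  linarith [ht.mul_sub_one_mul_log_four_le hc htj]

theorem mul_le_two_mul_log_four_mul_sq (hc : 0 < c) (hc' : c ≤ log 4) (ht : IsEfficient c n t)
    {M : ℕ} (hlast : ∀ j, M < j → t j = 0) : n * c ≤ 2 * log 4 * M ^ 2 := by
  have hbits : ∀ k ∈ range M, (t (k + 1) : ℝ) * c ≤ 2 * log 4 * M := fun k hk => by
    have hkM : k < M := mem_range.1 hk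
    rcases eq_or_ne (t (k + 1)) 0 with h0 | h0
    · rw [h0, Nat.cast_zero, zero_mul]
      positivity
    have hdonor := ht.mul_le_of_eq_zero hc M.add_one_ne_zero k.add_one_ne_zero
      (hlast (M + 1) M.lt_succ_self) h0
    have hkM' : (k : ℝ) + 1 ≤ M := by exact_mod_cast hkM
    push_cast at hdonor
    nlinarith [log_nonneg (by norm_num : (1 : ℝ) ≤ 4)]
  have hlen : (∑ k ∈ range M, t (k + 1) : ℝ) = n := by exact_mod_cast ht.1.sum_range_eq hlast
  calc (n : ℝ) * c = ∑ k ∈ range M, (t (k + 1) : ℝ) * c := by rw [← hlen, sum_mul]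
    _ ≤ ∑ k ∈ range M, 2 * log 4 * M := sum_le_sum hbits
    _ = 2 * log 4 * M ^ 2 := by rw [sum_const, card_range, nsmul_eq_mul]; ring

/-- With `β ≤ 1 / 2`, bit `k` costs at least `β M log 4 + k log 2`, so the geometric series in
`2⁻ᵏ` absorbs the number of transmitted bits and no `log M` loss appears. -/
theorem log_distortionLB_le (hc : 0 < c) (hb : 0 < b) (ht : IsEfficient c n t) {M : ℕ}
    (htM : t M ≠ 0) (hlast : ∀ j, M < j → t j = 0) :
    log (distortionLB b t) ≤ -(min (1 / 2) (b / c) * log 4 * M) := by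
  set β := min (1 / 2) (b / c)
  have hβ : β ≤ 1 / 2 := min_le_left _ _
  have hβ' : β ≤ b / c := min_le_right _ _
  have hlog4 : log 4 = 2 * log 2 := by
    rw [show (4 : ℝ) = 2 ^ 2 by norm_num, log_pow, Nat.cast_ofNat]
  have hlog2 : 0 ≤ log 2 := log_nonneg one_le_two
  have hcost (k : ℕ) (hk : k ≠ 0) : β * log 4 * M + k * log 2 ≤ bitCost b t k := by
    rcases le_or_gt k M with hkM | hkM
    · have hrecv := ht.sub_mul_log_four_le hc htM hk hkM
      have hkM' : (k : ℝ) ≤ M := by exact_mod_cast hkM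
      have htb : β * (((M : ℝ) - k) * log 4) ≤ t k * b :=
        calc β * (((M : ℝ) - k) * log 4) ≤ b / c * (((M : ℝ) - k) * log 4) :=
              mul_le_mul_of_nonneg_right hβ' (by nlinarith)
          _ ≤ b / c * (t k * c) := mul_le_mul_of_nonneg_left hrecv (by positivity)
          _ = t k * b := by field_simp
      rw [bitCost, hlog4]
      rw [hlog4] at htb
      nlinarith [mul_nonneg (mul_nonneg (Nat.cast_nonneg k) (sub_nonneg.2 hβ)) hlog2]
    · have hkM' : (M : ℝ) < k := by exact_mod_cast hkM
      rw [bitCost, hlast k hkM, Nat.cast_zero, zero_mul, add_zero, hlog4]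
      nlinarith [mul_le_mul_of_nonneg_right hβ (mul_nonneg (Nat.cast_nonneg M) hlog2),
        mul_le_mul_of_nonneg_right hkM'.le hlog2]
  have hL : distortionLB b t ≤ exp (-(β * log 4 * M)) := by
    rw [distortionLB_eq_tsum]
    have := tsum_exp_neg_bitCost_le_exp_neg hcost
    have : 0 ≤ ∑' k : ℕ, exp (-bitCost b t (k + 1)) := tsum_nonneg fun k => (exp_pos _).le
    linarith
  exact (log_le_log (distortionLB_pos hb.le t) hL).trans_eq (log_exp _)

theorem le_neg_log_distortionLB (hc : 0 < c) (hc' : c ≤ log 4) (hb : 0 < b) (hn : n ≠ 0)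
    (ht : IsEfficient c n t) :
    min (1 / 2) (b / c) * log 4 * √(c / (2 * log 4)) * √n ≤ -log (distortionLB b t) := by
  obtain ⟨M, -, htM, hlast⟩ :=
    ht.1.exists_last hn fun j hj => ht.eq_zero_of_floor_add_one_lt hc hj
  have hlog4 : 0 < log 4 := log_pos (by norm_num)
  have hM : √(c / (2 * log 4)) * √n ≤ M := by
    rw [← sqrt_mul (by positivity), sqrt_le_iff, div_mul_eq_mul_div, div_le_iff₀ (by positivity)]
    have := ht.mul_le_two_mul_log_four_mul_sq hc hc' hlast
    exact ⟨by positivity, by linarith⟩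
  have hβ : 0 ≤ min (1 / 2) (b / c) * log 4 := by positivity
  nlinarith [ht.log_distortionLB_le hc hb htM hlast, mul_le_mul_of_nonneg_left hM hβ]

theorem neg_log_distortionLB_le (hc : 0 < c) (hb : 0 ≤ b) (ht : IsEfficient c n t) :
    -log (distortionLB b t) ≤ √(2 * c * log 4) * √n + 3 * log 4 := by
  set x := √(2 * n * c / log 4)
  have hlog4 : 0 < log 4 := log_pos (by norm_num)
  set m := ⌊x⌋₊ + 2
  have htm : t m = 0 := ht.eq_zero_of_floor_add_one_lt hc (show ⌊x⌋₊ + 1 < m by omega)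
  have hL : exp (-((m + 1) * log 4)) ≤ distortionLB b t := by
    have := exp_neg_bitCost_le_tsum (t := t) hb (show m ≠ 0 by omega)
    rw [bitCost, htm, Nat.cast_zero, zero_mul, add_zero] at this
    calc exp (-((m + 1) * log 4)) = 1 / 4 * exp (-(m * log 4)) := by
          rw [show -((m + 1) * log 4) = -(m * log 4) + -log 4 by ring, exp_add, exp_neg (log 4),
            exp_log four_pos]
          ring
      _ ≤ distortionLB b t := by
          rw [distortionLB_eq_tsum]
          gcongr
  have hm : (m : ℝ) + 1 ≤ x + 3 := by
    have := Nat.floor_le (sqrt_nonneg (2 * n * c / log 4))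
    push_cast [m]
    linarith
  have hx : x * log 4 = √(2 * c * log 4) * √n := by
    rw [← sqrt_sq hlog4.le, ← sqrt_mul (by positivity), ← sqrt_mul (by positivity)]
    congr 1
    field_simp
    rw [sqrt_sq hlog4.le]
  have := log_le_log (exp_pos _) hL
  rw [log_exp] at this
  nlinarith

end IsEfficient

section Aurelian

variable {c : ℝ}

theorem one_le_aurelianR (hc : 0 < c) (hc' : c ≤ log 4) : 1 ≤ aurelianR c :=
  Nat.le_floor (by rw [Nat.cast_one, le_div_iff₀ hc]; linarith)

theorem aurelianR_mul_le (hc : 0 < c) : (aurelianR c : ℝ) * c ≤ log 4 :=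
  (le_div_iff₀ hc).1 (Nat.floor_le (by positivity))

theorem aurelianQ_add_one_le (hc : 0 < c) (hc' : c ≤ log 4) {n : ℕ} (hn : n ≠ 0) :
    (aurelianQ c n : ℝ) + 1 ≤ 3 * √n := by
  have hr : (1 : ℝ) ≤ aurelianR c := by exact_mod_cast one_le_aurelianR hc hc'
  have hn' : (1 : ℝ) ≤ n := by exact_mod_cast Nat.one_le_iff_ne_zero.2 hn
  set y := √(2 * n / (aurelianR c : ℝ) + 1 / 4)
  have hy : y ^ 2 = 2 * n / aurelianR c + 1 / 4 := sq_sqrt (by positivity)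
  have hyq : (aurelianQ c n : ℝ) + 1 / 2 ≤ y := by
    have hy₀ : 1 / 2 ≤ y := le_sqrt_of_sq_le (by norm_num; positivity)
    linarith [show (aurelianQ c n : ℝ) ≤ y - 1 / 2 from Nat.floor_le (sub_nonneg.2 hy₀)]
  have hr' : 2 * n / (aurelianR c : ℝ) ≤ 2 * n := div_le_self (by positivity) hr
  have hsq := sq_sqrt (Nat.cast_nonneg (α := ℝ) n)
  nlinarith [sqrt_nonneg (n : ℝ), Nat.cast_nonneg (α := ℝ) (aurelianQ c n)]

theorem sqrt_le_aurelianR_mul (hc : 0 < c) (hc' : c ≤ log 4) (n : ℕ) :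
    √(2 * aurelianR c * n) ≤ aurelianR c * ((aurelianQ c n : ℝ) + 3 / 2) := by
  have hr : (1 : ℝ) ≤ aurelianR c := by exact_mod_cast one_le_aurelianR hc hc'
  set y := √(2 * n / (aurelianR c : ℝ) + 1 / 4)
  have hy : y ^ 2 = 2 * n / aurelianR c + 1 / 4 := sq_sqrt (by positivity)
  have hyq : y ≤ (aurelianQ c n : ℝ) + 3 / 2 := by
    linarith [show y - 1 / 2 < (aurelianQ c n : ℝ) + 1 from Nat.lt_floor_add_one (y - 1 / 2)]
  have hry : 2 * aurelianR c * n ≤ (aurelianR c * y) ^ 2 := by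
    rw [mul_pow, hy]
    field_simp
    nlinarith
  rw [sqrt_le_iff]
  exact ⟨by positivity, hry.trans (pow_le_pow_left₀ (by positivity)
    (mul_le_mul_of_nonneg_left hyq (by positivity)) 2)⟩

theorem log_distortionUB_aurelian_le (hc : 0 < c) (n : ℕ) :
    log (distortionUB c (aurelian c n))
      ≤ log ((aurelianQ c n : ℝ) + 1) - aurelianR c * c * aurelianQ c n := by
  set q := aurelianQ c n
  set r := aurelianR c
  have hr : (r : ℝ) * c ≤ log 4 := aurelianR_mul_le hc
  have hcost (k : ℕ) (hk : 1 ≤ k) (hkq : k ≤ q) : r * c * q ≤ bitCost c (aurelian c n) k := by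
    have hcast : (aurelian c n k : ℝ) = ((q : ℝ) - k + 1) * r := by
      rw [aurelian, if_pos ⟨hk, hkq⟩]
      push_cast [Nat.cast_sub (show k ≤ aurelianQ c n from hkq)]
      ring
    have hk' : (k : ℝ) ≤ q := by exact_mod_cast hkq
    rw [bitCost, hcast]
    nlinarith [mul_le_mul_of_nonneg_left hr (Nat.cast_nonneg (α := ℝ) k)]
  have hU := tsum_exp_neg_bitCost_le_of_le hc.le
    (by nlinarith [Nat.cast_nonneg (α := ℝ) q] : r * c * q ≤ q * log 4) hcost
  rw [← distortionUB_eq_tsum] at hU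
  refine (log_le_log (distortionUB_pos hc.le _) hU).trans_eq ?_
  rw [log_mul (by positivity) (exp_pos _).ne', log_exp]
  ring

theorem neg_log_distortionUB_aurelian_le (hc : 0 < c) (hc' : c ≤ log 4) {n : ℕ} (hn : n ≠ 0) :
    -log (distortionUB c (aurelian c n)) ≤ 3 * log 4 * √n := by
  have hfirst : (aurelian c n 1 : ℝ) ≤ aurelianQ c n * aurelianR c := by
    unfold aurelian
    split_ifs with h
    · exact_mod_cast Nat.mul_le_mul_right _ (by omega)
    · simp only [Nat.cast_zero]
      positivity
  have hU := exp_neg_bitCost_le_tsum (t := aurelian c n) hc.le one_ne_zero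
  rw [← distortionUB_eq_tsum] at hU
  have := log_le_log (exp_pos _) hU
  rw [log_exp, bitCost, Nat.cast_one, one_mul] at this
  have hq := aurelianQ_add_one_le hc hc' hn
  have hr := aurelianR_mul_le hc
  nlinarith [mul_le_mul_of_nonneg_right hfirst hc.le, log_pos (by norm_num : (1 : ℝ) < 4),
    mul_le_mul_of_nonneg_left hr (Nat.cast_nonneg (α := ℝ) (aurelianQ c n))]

theorem sub_le_neg_log_distortionUB_aurelian (hc : 0 < c) (hc' : c ≤ log 4) {n : ℕ}
    (hn : n ≠ 0) : √(2 * aurelianR c) * c * √n - (3 / 2 * aurelianR c * c + log 3 + log √n)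
      ≤ -log (distortionUB c (aurelian c n)) := by
  have hsqrt : √(2 * aurelianR c) * c * √n = c * √(2 * aurelianR c * n) := by
    rw [sqrt_mul (show (0 : ℝ) ≤ 2 * aurelianR c by positivity)]
    ring
  have hlog : log ((aurelianQ c n : ℝ) + 1) ≤ log 3 + log √n := by
    rw [← log_mul (by norm_num) (by positivity)]
    exact log_le_log (by positivity) (aurelianQ_add_one_le hc hc' hn)
  nlinarith [log_distortionUB_aurelian_le hc n,
    mul_le_mul_of_nonneg_left (sqrt_le_aurelianR_mul hc hc' n) hc.le]

end Aurelian

/-- Corollary of the paper: with `A_1 = √(2 c ln 4)` and `A_2 = √(2r)·c`, for the Aurelian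
patterns `t^{(n)}` and any sequence `s^{(n)}` of efficient policies,
`liminf_{n→∞} ln(U_c(t^{(n)})) / ln(L_b(s^{(n)})) ≥ A_2/A_1 > 0`. -/
theorem stmt_16 (c b : ℝ) (hc : 0 < c) (hc' : c ≤ Real.log 4) (hb : 0 < b)
    (s : ℕ → ℕ → ℕ) (heff : ∀ n : ℕ, 1 ≤ n → IsEfficient c n (s n)) :
    Filter.liminf (fun n : ℕ =>
        Real.log (distortionUB c (aurelian c n)) / Real.log (distortionLB b (s n)))
        Filter.atTop
      ≥ (Real.sqrt (2 * aurelianR c) * c) / Real.sqrt (2 * c * Real.log 4) ∧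
    0 < (Real.sqrt (2 * aurelianR c) * c) / Real.sqrt (2 * c * Real.log 4) := by
  have hr : (1 : ℝ) ≤ aurelianR c := by exact_mod_cast one_le_aurelianR hc hc'
  have hA₁ : 0 < √(2 * c * log 4) := sqrt_pos.2 (by positivity)
  have hA₂ : 0 < √(2 * aurelianR c) * c := mul_pos (sqrt_pos.2 (by linarith)) hc
  refine ⟨?_, div_pos hA₂ hA₁⟩
  have hy : Tendsto (fun n : ℕ => √(n : ℝ)) atTop atTop :=
    tendsto_sqrt_atTop.comp tendsto_natCast_atTop_atTop
  have he : (fun n : ℕ => 3 / 2 * aurelianR c * c + log 3 + log √n) =o[atTop] fun n => √n :=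
    (isLittleO_const_left.2 (.inr (tendsto_norm_atTop_atTop.comp hy))).add
      (isLittleO_log_id_atTop.comp_tendsto hy)
  simp_rw [← neg_div_neg_eq (log (distortionUB c _))]
  have hn : ∀ᶠ n in atTop, n ≠ 0 := eventually_ne_atTop 0
  refine le_liminf_div_of_isLittleO (N := fun n => -log (distortionUB c (aurelian c n)))
    (D := fun n => -log (distortionLB b (s n))) hA₁
    (K := 3 * log 4) (C := 3 * log 4) (δ := min (1 / 2) (b / c) * log 4 * √(c / (2 * log 4)))
    (by positivity) hy he ?_ ?_ ?_ ?_ ?_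
  all_goals filter_upwards [hn] with n hn
  · exact sub_le_neg_log_distortionUB_aurelian hc hc' hn
  · exact neg_nonneg.2 (log_distortionUB_nonpos hc.le _)
  · exact neg_log_distortionUB_aurelian_le hc hc' hn
  · exact (heff n (Nat.one_le_iff_ne_zero.2 hn)).le_neg_log_distortionLB hc hc' hb hn
  · exact (heff n (Nat.one_le_iff_ne_zero.2 hn)).neg_log_distortionLB_le hc hb.le
end

section
/- Let n ≥ 0 and let f : [0,1] → ℝ be a function whose range contains at most 2^n elements. Then sup_{x ∈ [0,1]} |x − f(x)| ≥ 2^{−(n+1)}. -/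
/-- Noiseless lower bound from the introduction: an estimator `f : [0,1] → ℝ` taking at
most `2^n` distinct values satisfies `sup_{x ∈ [0,1]} |x − f(x)| ≥ 2^{−(n+1)}`. -/
theorem stmt_17 (n : ℕ) (f : Set.Icc (0 : ℝ) 1 → ℝ)
    (hfin : (Set.range f).Finite) (hcard : (Set.range f).ncard ≤ 2 ^ n) :
    ((2 : ℝ) ^ (n + 1))⁻¹ ≤ ⨆ x : Set.Icc (0 : ℝ) 1, |(x : ℝ) - f x| := by
  by_contra h
  push_neg at h
  set S := ⨆ x : Set.Icc (0 : ℝ) 1, |(x : ℝ) - f x| with hSdef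
  obtain ⟨M, hM⟩ : ∃ M, ∀ x, |f x| ≤ M := by
    obtain ⟨M, hM⟩ := (hfin.image abs).bddAbove
    exact ⟨M, fun x => hM ⟨f x, ⟨x, rfl⟩, rfl⟩⟩
  have hbdd : BddAbove (Set.range fun x : Set.Icc (0 : ℝ) 1 => |(x : ℝ) - f x|) := by
    refine ⟨1 + M, ?_⟩
    rintro _ ⟨x, rfl⟩
    have hx0 := x.2.1
    have hx1 := x.2.2
    have h1 : |(x : ℝ)| ≤ 1 := by rw [abs_of_nonneg hx0]; exact hx1
    calc |(x : ℝ) - f x| ≤ |(x : ℝ)| + |f x| := abs_sub _ _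
      _ ≤ 1 + M := add_le_add h1 (hM x)
  have hle : ∀ x : Set.Icc (0 : ℝ) 1, |(x : ℝ) - f x| ≤ S := fun x => le_ciSup hbdd x
  have h2n : (0 : ℝ) < 2 ^ n := by positivity
  have hS2 : 2 * S < ((2 : ℝ) ^ n)⁻¹ := by
    have : ((2 : ℝ) ^ (n + 1))⁻¹ = ((2 : ℝ) ^ n)⁻¹ / 2 := by
      rw [pow_succ]
      field_simp
    rw [this] at h
    linarith
  set p : Fin (2 ^ n + 1) → Set.Icc (0 : ℝ) 1 := fun i =>
    ⟨(i : ℝ) / 2 ^ n, by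
      constructor
      · positivity
      · rw [div_le_one h2n]
        have : (i : ℕ) ≤ 2 ^ n := by omega
        exact_mod_cast this⟩ with hpdef
  have hinj : Function.Injective fun i => f (p i) := by
    intro i j hij
    by_contra hne
    have hdist : ((2 : ℝ) ^ n)⁻¹ ≤ |(p i : ℝ) - (p j : ℝ)| := by
      have h1 : (1 : ℤ) ≤ |((i : ℕ) : ℤ) - ((j : ℕ) : ℤ)| := by
        refine Int.one_le_abs ?_
        have : (i : ℕ) ≠ (j : ℕ) := fun hh => hne (Fin.ext hh)
        omega
      have h1' : (1 : ℝ) ≤ |((i : ℕ) : ℝ) - ((j : ℕ) : ℝ)| := by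
        exact_mod_cast h1
      have : |(p i : ℝ) - (p j : ℝ)| = |((i : ℕ) : ℝ) - ((j : ℕ) : ℝ)| / 2 ^ n := by
        simp only [hpdef]
        rw [div_sub_div_same, abs_div, abs_of_pos h2n]
      rw [this]
      rw [le_div_iff₀ h2n, inv_mul_cancel₀ (ne_of_gt h2n)]
      exact h1'
    have hsmall : |(p i : ℝ) - (p j : ℝ)| ≤ 2 * S := by
      calc |(p i : ℝ) - (p j : ℝ)|
          ≤ |(p i : ℝ) - f (p i)| + |f (p j) - (p j : ℝ)| := by
            have := abs_sub_abs_le_abs_sub (0:ℝ) (0:ℝ)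
            have heq : (p i : ℝ) - (p j : ℝ) =
                ((p i : ℝ) - f (p i)) + (f (p j) - (p j : ℝ)) := by
              have : f (p i) = f (p j) := hij
              rw [this]; ring
            rw [heq]
            exact abs_add_le _ _
        _ ≤ S + S := by
            have h1 := hle (p i)
            have h2 : |f (p j) - (p j : ℝ)| ≤ S := by
              rw [abs_sub_comm]; exact hle (p j)
            exact add_le_add h1 h2
        _ = 2 * S := by ring
    linarith
  have hge : 2 ^ n + 1 ≤ (Set.range f).ncard := by
    have hsub : Set.range (fun i => f (p i)) ⊆ Set.range f := by
      rintro _ ⟨i, rfl⟩; exact ⟨p i, rfl⟩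
    have hcardr : (Set.range fun i => f (p i)).ncard = 2 ^ n + 1 := by
      rw [← Nat.card_coe_set_eq, Nat.card_range_of_injective hinj]
      simp
    calc 2 ^ n + 1 = (Set.range fun i => f (p i)).ncard := hcardr.symm
      _ ≤ (Set.range f).ncard := Set.ncard_le_ncard hsub hfin
  omega
end

section
/- Let n ≥ 1, let a_1, …, a_n ∈ [0,1], let g : {0,1}^n → ℝ, and define f : [0,1] → ℝ by f(x) = g( (𝟙[x ≤ a_1], …, 𝟙[x ≤ a_n]) ). Then sup_{x ∈ [0,1]} |x − f(x)| ≥ 1/(2(n+1)). -/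
/-!
The answers to the threshold questions only depend on the set of thresholds `a i ≥ x`, which
shrinks as `x` grows and has at most `n + 1` possible sizes. Among the `n + 2` grid points
`k / (n + 1)` two must therefore receive the same answers, hence the same estimate, although they
are at distance at least `1 / (n + 1)`; the estimate misses one of them by at least half of that.
-/

open Set

noncomputable def thresholdSet {ι : Type*} [Fintype ι] (a : ι → ℝ) (x : ℝ) : Finset ι :=
  Finset.univ.filter fun i => x ≤ a i

lemma thresholdSet_antitone {ι : Type*} [Fintype ι] (a : ι → ℝ) : Antitone (thresholdSet a) :=
  fun _ _ hxy _ => by simpa [thresholdSet] using hxy.trans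

lemma answers_eq_of_thresholdSet_eq {ι : Type*} [Fintype ι] {a : ι → ℝ} {x y : ℝ}
    (h : thresholdSet a x = thresholdSet a y) :
    (fun i => decide (x ≤ a i)) = fun i => decide (y ≤ a i) := by
  funext i
  simpa [thresholdSet] using congrArg (i ∈ ·) h

/-- A chain of finite subsets of `α` has at most `card α + 1` distinct members. -/
lemma Antitone.exists_lt_eq_of_card_lt {ι α : Type*} [LinearOrder ι] [Fintype ι] [Fintype α]
    {S : ι → Finset α} (hS : Antitone S) (hcard : Fintype.card α + 1 < Fintype.card ι) :
    ∃ k l, k < l ∧ S k = S l := by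
  obtain ⟨k, -, l, -, hne, hkl⟩ := Finset.exists_ne_map_eq_of_card_lt_of_maps_to
    (s := Finset.univ) (t := Finset.range (Fintype.card α + 1)) (f := fun k => (S k).card)
    (by simpa using hcard)
    (fun k _ => by simpa [Nat.lt_succ_iff] using (S k).card_le_univ)
  have key : ∀ k l, k < l → (S k).card = (S l).card → S k = S l := fun k l hlt hc =>
    (Finset.eq_of_subset_of_card_le (hS hlt.le) hc.le).symm
  rcases hne.lt_or_gt with hlt | hlt
  · exact ⟨k, l, hlt, key k l hlt hkl⟩
  · exact ⟨l, k, hlt, key l k hlt hkl.symm⟩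

noncomputable def unitGrid (m : ℕ) (k : Fin (m + 1)) : Icc (0 : ℝ) 1 :=
  ⟨k / m, by positivity, div_le_one_of_le₀ (by exact_mod_cast k.is_le) m.cast_nonneg⟩

lemma unitGrid_monotone (m : ℕ) : Monotone (unitGrid m) :=
  fun k l h => show (k : ℝ) / m ≤ l / m from
    div_le_div_of_nonneg_right (by exact_mod_cast h) m.cast_nonneg

lemma inv_le_unitGrid_sub {m : ℕ} {k l : Fin (m + 1)} (hkl : k < l) :
    1 / (m : ℝ) ≤ unitGrid m l - unitGrid m k := by
  have hgap : (1 : ℝ) ≤ l - k := by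
    rw [le_sub_iff_add_le']
    exact_mod_cast Fin.lt_def.mp hkl
  simpa only [unitGrid, sub_div] using div_le_div_of_nonneg_right hgap m.cast_nonneg

lemma bddAbove_range_abs_sub {X : Type*} {e f : X → ℝ} {A B : ℝ} (he : ∀ x, |e x| ≤ A)
    (hf : ∀ x, |f x| ≤ B) : BddAbove (range fun x => |e x - f x|) :=
  ⟨A + B, by
    rintro _ ⟨x, rfl⟩
    linarith [abs_sub (e x) (f x), he x, hf x]⟩

lemma abs_sub_div_two_le_ciSup_of_eq {X : Type*} {e f : X → ℝ}
    (hbdd : BddAbove (range fun x => |e x - f x|)) {x y : X} (hxy : f x = f y) :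
    |e x - e y| / 2 ≤ ⨆ z, |e z - f z| := by
  have hx := le_ciSup hbdd x
  have hy := le_ciSup hbdd y
  have htri : |e x - e y| ≤ |e x - f x| + |e y - f y| := by
    simpa only [hxy, abs_sub_comm (f y)] using abs_sub_le (e x) (f y) (e y)
  linarith

theorem stmt_18_general (n : ℕ) (a : Fin n → ℝ)
    (g : (Fin n → Bool) → ℝ)
    (f : Set.Icc (0 : ℝ) 1 → ℝ)
    (hf : ∀ x : Set.Icc (0 : ℝ) 1, f x = g fun i => decide ((x : ℝ) ≤ a i)) :
    1 / (2 * ((n : ℝ) + 1)) ≤ ⨆ x : Set.Icc (0 : ℝ) 1, |(x : ℝ) - f x| := by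
  obtain ⟨k, l, hkl, hS⟩ := ((thresholdSet_antitone a).comp_monotone
    (Subtype.mono_coe _ |>.comp (unitGrid_monotone (n + 1)))).exists_lt_eq_of_card_lt (by simp)
  have hfkl : f (unitGrid (n + 1) k) = f (unitGrid (n + 1) l) := by
    rw [hf, hf]
    exact congrArg g (answers_eq_of_thresholdSet_eq hS)
  obtain ⟨B, hB⟩ := Finite.bddAbove_range fun b => |g b|
  have hbdd : BddAbove (range fun x : Icc (0 : ℝ) 1 => |(x : ℝ) - f x|) :=
    bddAbove_range_abs_sub (A := 1) (fun x => abs_le.2 ⟨by linarith [x.2.1], x.2.2⟩)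
      (fun x => by rw [hf]; exact hB ⟨_, rfl⟩)
  calc 1 / (2 * ((n : ℝ) + 1)) = 1 / ((n + 1 : ℕ) : ℝ) / 2 := by
        rw [div_div, mul_comm]
        push_cast
        ring
    _ ≤ |(unitGrid (n + 1) k : ℝ) - unitGrid (n + 1) l| / 2 := by
      gcongr
      rw [abs_sub_comm]
      exact (inv_le_unitGrid_sub hkl).trans (le_abs_self _)
    _ ≤ _ := abs_sub_div_two_le_ciSup_of_eq hbdd hfkl

/-- Noiseless lower bound for non-adaptive interval questions: an estimator built from
the `n` answers to threshold questions `x ≤ a_i?` satisfies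
`sup_{x ∈ [0,1]} |x − f(x)| ≥ 1/(2(n+1))`. -/
theorem stmt_18 (n : ℕ) (hn : 1 ≤ n) (a : Fin n → ℝ)
    (ha : ∀ i, a i ∈ Set.Icc (0 : ℝ) 1) (g : (Fin n → Bool) → ℝ)
    (f : Set.Icc (0 : ℝ) 1 → ℝ)
    (hf : ∀ x : Set.Icc (0 : ℝ) 1, f x = g fun i => decide ((x : ℝ) ≤ a i)) :
    1 / (2 * ((n : ℝ) + 1)) ≤ ⨆ x : Set.Icc (0 : ℝ) 1, |(x : ℝ) - f x| :=
  stmt_18_general n a g f hf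
end
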